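/- arXiv:2111.04229 — 8 statements merged into one kernel-verified Lean document; each statement's English description precedes it below -/
import Mathlib

section
/- Let f : Λ → ℂ be discrete analytic on Λ. Then pointwise on Λ: (I+α₋δ_x)((I+α₊δ_y)f) = f and (I+α₊δ_y)((I+α₋δ_x)f) = f; (I+α₋δ_x)((I+α₋δ_y)f) = (I+δ_x)f; and (I+α₊δ_x)((I+α₊δ_y)f) = (I+δ_y)f. Moreover each of the six maps f ↦ (I+δ_x)f, f ↦ (I+δ_y)f, f ↦ (I+α₊δ_x)f, f ↦ (I+α₋δ_x)f, f ↦ (I+α₊δ_y)f, f ↦ (I+α₋δ_y)f is a bijection of the space of ℂ-valued discrete analytic functions on Λ onto itself. -/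
open Complex

noncomputable section

/-- The Gaussian integer lattice Λ = ℤ + iℤ. -/
abbrev GI := GaussianInt

/-- The lattice element i. -/
def Ii : GI := ⟨0, 1⟩

/-- The difference operator δ_x. -/
def dx (f : GI → ℂ) : GI → ℂ := fun z => f (z + 1) - f z

/-- The difference operator δ_y. -/
def dy (f : GI → ℂ) : GI → ℂ := fun z => f (z + Ii) - f z

/-- Discrete analyticity on the full lattice Λ. -/
def DA (f : GI → ℂ) : Prop :=
  ∀ z : GI, (f (z + 1 + Ii) - f z) / (1 + I) = (f (z + 1) - f (z + Ii)) / (1 - I)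

/-- α₊ = (1+i)/2. -/
def ap : ℂ := (1 + I) / 2

/-- α₋ = (1−i)/2. -/
def am : ℂ := (1 - I) / 2

/-- `T` is a bijection of the space of ℂ-valued discrete analytic functions on Λ
onto itself: it maps that space into itself, and every discrete analytic function
has a unique discrete analytic preimage. -/
def BijOnDA (T : (GI → ℂ) → (GI → ℂ)) : Prop :=
  (∀ g, DA g → DA (T g)) ∧ ∀ h, DA h → ∃! g : GI → ℂ, DA g ∧ T g = h


/-! Discrete analyticity says `f (z+1+i) = f z + i (f (z+1) - f (z+i))`, so on analytic functions
the product `(I + c δ_x)(I + d δ_y)`, a priori a combination of `f` at `z`, `z+1`, `z+i`, `z+1+i`,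
only involves the first three points. For `c, d ∈ {α₊, α₋}` it collapses to a single translation
(by `0`, `1`, `i` or `1+i`). Translations preserve analyticity and commute with these operators,
so each `I + α δ` is inverted on analytic functions by a translate of the complementary operator. -/

lemma DA_iff {f : GI → ℂ} :
    DA f ↔ ∀ z : GI, f (z + 1 + Ii) = f z + I * (f (z + 1) - f (z + Ii)) := by
  have hm : (1 : ℂ) - I ≠ 0 := fun h => by simpa using congrArg im h
  have hp : (1 : ℂ) + I = (1 - I) * I := by linear_combination I_mul_I
  refine forall_congr' fun z => ?_
  rw [hp, div_eq_div_iff (mul_ne_zero hm I_ne_zero) hm, mul_comm (1 - I), ← mul_assoc,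
    mul_left_inj' hm, sub_eq_iff_eq_add', mul_comm]

def shift (w : GI) (f : GI → ℂ) : GI → ℂ := fun z => f (z + w)

def idAddDx (c : ℂ) (f : GI → ℂ) : GI → ℂ := fun z => f z + c * dx f z

def idAddDy (c : ℂ) (f : GI → ℂ) : GI → ℂ := fun z => f z + c * dy f z

lemma shift_zero (f : GI → ℂ) : shift 0 f = f := by
  funext z; simp [shift]

lemma shift_shift (v w : GI) (f : GI → ℂ) : shift v (shift w f) = shift (v + w) f := by
  funext z; simp only [shift, add_assoc]

lemma shift_comm (v w : GI) (f : GI → ℂ) : shift v (shift w f) = shift w (shift v f) := by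
  rw [shift_shift, shift_shift, add_comm]

lemma shift_neg_shift (w : GI) (f : GI → ℂ) : shift (-w) (shift w f) = f := by
  rw [shift_shift, neg_add_cancel, shift_zero]

lemma idAddDx_shift (c : ℂ) (w : GI) (f : GI → ℂ) :
    idAddDx c (shift w f) = shift w (idAddDx c f) := by
  funext z; simp only [idAddDx, shift, dx, add_right_comm]

lemma idAddDy_shift (c : ℂ) (w : GI) (f : GI → ℂ) :
    idAddDy c (shift w f) = shift w (idAddDy c f) := by
  funext z; simp only [idAddDy, shift, dy, add_right_comm]

lemma idAddDx_idAddDy_comm (c d : ℂ) (f : GI → ℂ) :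
    idAddDx c (idAddDy d f) = idAddDy d (idAddDx c f) := by
  funext z
  simp only [idAddDx, idAddDy, dx, dy, add_right_comm z Ii 1]
  ring

lemma self_add_dx (f : GI → ℂ) (z : GI) : f z + dx f z = f (z + 1) := add_sub_cancel _ _

lemma self_add_dy (f : GI → ℂ) (z : GI) : f z + dy f z = f (z + Ii) := add_sub_cancel _ _

section

variable {f : GI → ℂ}

protected lemma DA.shift (hf : DA f) (w : GI) : DA (shift w f) :=
  DA_iff.2 fun z => by
    simpa only [shift, add_right_comm _ w] using DA_iff.1 hf (z + w)

protected lemma DA.idAddDx (hf : DA f) (c : ℂ) : DA (idAddDx c f) := by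
  refine DA_iff.2 fun z => ?_
  simp only [idAddDx, dx, add_right_comm _ Ii 1, DA_iff.1 hf (z + 1), DA_iff.1 hf z]
  ring

protected lemma DA.idAddDy (hf : DA f) (c : ℂ) : DA (idAddDy c f) := by
  refine DA_iff.2 fun z => ?_
  have h := DA_iff.1 hf (z + Ii)
  rw [add_right_comm _ Ii 1] at h
  simp only [idAddDy, dy, h, DA_iff.1 hf z]
  ring

lemma DA.idAddDx_idAddDy_apply (hf : DA f) (c d : ℂ) (z : GI) :
    idAddDx c (idAddDy d f) z =
      (1 - c - d + 2 * c * d) * f z + c * (1 + (I - 1) * d) * f (z + 1)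
        + d * (1 - (1 + I) * c) * f (z + Ii) := by
  simp only [idAddDx, idAddDy, dx, dy, DA_iff.1 hf z]
  ring

lemma DA.idAddDx_am_idAddDy_ap (hf : DA f) : idAddDx am (idAddDy ap f) = f := by
  funext z
  rw [hf.idAddDx_idAddDy_apply, am, ap]
  ring_nf
  simp only [I_sq, I_pow_three]
  ring

lemma DA.idAddDx_am_idAddDy_am (hf : DA f) : idAddDx am (idAddDy am f) = shift 1 f := by
  funext z
  rw [hf.idAddDx_idAddDy_apply, am, shift]
  ring_nf
  simp only [I_sq, I_pow_three]
  ring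

lemma DA.idAddDx_ap_idAddDy_ap (hf : DA f) : idAddDx ap (idAddDy ap f) = shift Ii f := by
  funext z
  rw [hf.idAddDx_idAddDy_apply, ap, shift]
  ring_nf
  simp only [I_sq, I_pow_three]
  ring

lemma DA.idAddDx_ap_idAddDy_am (hf : DA f) : idAddDx ap (idAddDy am f) = shift (1 + Ii) f := by
  funext z
  rw [hf.idAddDx_idAddDy_apply, am, ap, shift, ← add_assoc, DA_iff.1 hf]
  ring_nf
  simp only [I_sq, I_pow_three]
  ring

lemma DA.idAddDy_ap_idAddDx_am (hf : DA f) : idAddDy ap (idAddDx am f) = f := by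
  rw [← idAddDx_idAddDy_comm, hf.idAddDx_am_idAddDy_ap]

end

lemma BijOnDA.of_comp_eq_shift {T S : (GI → ℂ) → GI → ℂ} (w : GI)
    (hT : ∀ g, DA g → DA (T g)) (hS : ∀ g, DA g → DA (S g))
    (hT_shift : ∀ v g, T (shift v g) = shift v (T g))
    (hTS : ∀ g, DA g → T (S g) = shift w g) (hST : ∀ g, DA g → S (T g) = shift w g) :
    BijOnDA T := by
  refine ⟨hT, fun h hh => ⟨shift (-w) (S h), ⟨(hS h hh).shift _, ?_⟩, ?_⟩⟩
  · rw [hT_shift, hTS h hh, shift_neg_shift]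
  · rintro g ⟨hg, rfl⟩
    rw [hST g hg, shift_neg_shift]

lemma bijOnDA_shift (w : GI) : BijOnDA (shift w) :=
  .of_comp_eq_shift (S := id) w (fun _ hg => hg.shift w) (fun _ hg => hg) (shift_comm w)
    (fun _ _ => rfl) (fun _ _ => rfl)

lemma bijOnDA_idAddDx_am : BijOnDA (idAddDx am) :=
  .of_comp_eq_shift (S := idAddDy ap) 0 (fun _ hg => hg.idAddDx am) (fun _ hg => hg.idAddDy ap)
    (idAddDx_shift am) (fun _ hg => by rw [shift_zero, hg.idAddDx_am_idAddDy_ap])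
    (fun _ hg => by rw [shift_zero, hg.idAddDy_ap_idAddDx_am])

lemma bijOnDA_idAddDy_ap : BijOnDA (idAddDy ap) :=
  .of_comp_eq_shift (S := idAddDx am) 0 (fun _ hg => hg.idAddDy ap) (fun _ hg => hg.idAddDx am)
    (idAddDy_shift ap) (fun _ hg => by rw [shift_zero, hg.idAddDy_ap_idAddDx_am])
    (fun _ hg => by rw [shift_zero, hg.idAddDx_am_idAddDy_ap])

lemma bijOnDA_idAddDx_ap : BijOnDA (idAddDx ap) :=
  .of_comp_eq_shift (S := idAddDy am) (1 + Ii) (fun _ hg => hg.idAddDx ap)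
    (fun _ hg => hg.idAddDy am) (idAddDx_shift ap) (fun _ hg => hg.idAddDx_ap_idAddDy_am)
    (fun _ hg => by rw [← idAddDx_idAddDy_comm, hg.idAddDx_ap_idAddDy_am])

lemma bijOnDA_idAddDy_am : BijOnDA (idAddDy am) :=
  .of_comp_eq_shift (S := idAddDx ap) (1 + Ii) (fun _ hg => hg.idAddDy am)
    (fun _ hg => hg.idAddDx ap) (idAddDy_shift am)
    (fun _ hg => by rw [← idAddDx_idAddDy_comm, hg.idAddDx_ap_idAddDy_am])
    (fun _ hg => hg.idAddDx_ap_idAddDy_am)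

/-- the pointwise identities
`(I+α₋δ_x)((I+α₊δ_y)f) = f`, `(I+α₊δ_y)((I+α₋δ_x)f) = f`,
`(I+α₋δ_x)((I+α₋δ_y)f) = (I+δ_x)f`, `(I+α₊δ_x)((I+α₊δ_y)f) = (I+δ_y)f`
for discrete analytic `f`, and the bijectivity of the six operators
`I+δ_x`, `I+δ_y`, `I+α₊δ_x`, `I+α₋δ_x`, `I+α₊δ_y`, `I+α₋δ_y` on the space of
discrete analytic functions on Λ. -/
theorem stmt1 (f : GI → ℂ) (hf : DA f) :
    (∀ z : GI,
      (fun w => f w + ap * dy f w) z + am * dx (fun w => f w + ap * dy f w) z = f z) ∧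
    (∀ z : GI,
      (fun w => f w + am * dx f w) z + ap * dy (fun w => f w + am * dx f w) z = f z) ∧
    (∀ z : GI,
      (fun w => f w + am * dy f w) z + am * dx (fun w => f w + am * dy f w) z
        = f z + dx f z) ∧
    (∀ z : GI,
      (fun w => f w + ap * dy f w) z + ap * dx (fun w => f w + ap * dy f w) z
        = f z + dy f z) ∧
    BijOnDA (fun g z => g z + dx g z) ∧
    BijOnDA (fun g z => g z + dy g z) ∧
    BijOnDA (fun g z => g z + ap * dx g z) ∧
    BijOnDA (fun g z => g z + am * dx g z) ∧
    BijOnDA (fun g z => g z + ap * dy g z) ∧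
    BijOnDA (fun g z => g z + am * dy g z) := by
  have hdx : (fun (g : GI → ℂ) z => g z + dx g z) = shift 1 := by
    funext g z; exact self_add_dx g z
  have hdy : (fun (g : GI → ℂ) z => g z + dy g z) = shift Ii := by
    funext g z; exact self_add_dy g z
  refine ⟨congrFun hf.idAddDx_am_idAddDy_ap, congrFun hf.idAddDy_ap_idAddDx_am,
    fun z => (congrFun hf.idAddDx_am_idAddDy_am z).trans (self_add_dx f z).symm,
    fun z => (congrFun hf.idAddDx_ap_idAddDy_ap z).trans (self_add_dy f z).symm,
    hdx ▸ bijOnDA_shift 1, hdy ▸ bijOnDA_shift Ii,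
    bijOnDA_idAddDx_ap, bijOnDA_idAddDx_am, bijOnDA_idAddDy_ap, bijOnDA_idAddDy_am⟩

end
end

section
/- For every λ ∈ ℂ with λ ∉ {−1, −2α₊, −2α₋} (so that 1+λ ≠ 0 and 1+α₋λ ≠ 0 and e_λ is defined), the function e_λ is discrete analytic on Λ, satisfies e_λ(0) = 1, and is an eigenfunction of δ_x with eigenvalue λ: (δ_x e_λ)(z) = λ·e_λ(z) for all z ∈ Λ. Hence the set of eigenvalues of δ_x on the space of ℂ-valued discrete analytic functions on Λ is exactly ℂ \ {−1, −2α₊, −2α₋}. -/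
open Complex

noncomputable section

/-- e_λ(z) = (1+λ)^{Re z} · ((1+α₊λ)/(1+α₋λ))^{Im z}, with integer exponents. -/
def eFun (lam : ℂ) (z : GI) : ℂ :=
  (1 + lam) ^ z.re * ((1 + ap * lam) / (1 + am * lam)) ^ z.im


lemma h1pI : (1 + I : ℂ) ≠ 0 := by
  intro h; have := congrArg Complex.im h; simp at this
lemma h1mI : (1 - I : ℂ) ≠ 0 := by
  intro h; have := congrArg Complex.im h; simp at this

lemma hne_am (lam : ℂ) (h : lam ≠ -2 * ap) : 1 + am * lam ≠ 0 := by
  intro h0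
  apply h
  have hI := Complex.I_sq
  simp only [am, ap] at h0 ⊢
  linear_combination (1+I)*h0 + (lam/2)*hI

lemma hne_ap (lam : ℂ) (h : lam ≠ -2 * am) : 1 + ap * lam ≠ 0 := by
  intro h0
  apply h
  have hI := Complex.I_sq
  simp only [am, ap] at h0 ⊢
  linear_combination (1-I)*h0 + (lam/2)*hI

lemma re_add_one (z : GI) : (z + 1).re = z.re + 1 := by simp [Zsqrtd.re_add]
lemma im_add_one (z : GI) : (z + 1).im = z.im := by simp [Zsqrtd.im_add]
lemma re_add_Ii (z : GI) : (z + Ii).re = z.re := by simp [Ii, Zsqrtd.re_add]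
lemma im_add_Ii (z : GI) : (z + Ii).im = z.im + 1 := by simp [Ii, Zsqrtd.im_add]

lemma eFun_add_one (lam : ℂ) (h1 : 1 + lam ≠ 0) (z : GI) :
    eFun lam (z + 1) = (1 + lam) * eFun lam z := by
  simp only [eFun, re_add_one, im_add_one, zpow_add_one₀ h1]
  ring

lemma eFun_add_Ii (lam : ℂ) (hp : 1 + ap * lam ≠ 0) (hm : 1 + am * lam ≠ 0) (z : GI) :
    eFun lam (z + Ii) = ((1 + ap * lam) / (1 + am * lam)) * eFun lam z := by
  have hμ : (1 + ap * lam) / (1 + am * lam) ≠ 0 := div_ne_zero hp hm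
  simp only [eFun, re_add_Ii, im_add_Ii, zpow_add_one₀ hμ]
  ring

lemma DA_eFun (lam : ℂ) (h1 : 1 + lam ≠ 0) (hp : 1 + ap * lam ≠ 0) (hm : 1 + am * lam ≠ 0) :
    DA (eFun lam) := by
  intro z
  have hz : z + 1 + Ii = (z + Ii) + 1 := by ring
  rw [hz]
  simp only [eFun_add_one lam h1, eFun_add_Ii lam hp hm]
  have key : ((1+lam)*(1+ap*lam) - (1+am*lam))*(1-I)
      = ((1+lam)*(1+am*lam) - (1+ap*lam))*(1+I) := by
    simp only [ap, am]; ring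
  set e := eFun lam z
  rw [div_eq_div_iff h1pI h1mI]
  have hm' : 1 + lam * am ≠ 0 := by rwa [mul_comm lam am]
  field_simp
  linear_combination e * key

lemma eFun_zero (lam : ℂ) : eFun lam 0 = 1 := by
  simp [eFun, Zsqrtd.re_zero, Zsqrtd.im_zero]

lemma dx_eFun (lam : ℂ) (h1 : 1 + lam ≠ 0) (z : GI) :
    dx (eFun lam) z = lam * eFun lam z := by
  simp only [dx, eFun_add_one lam h1]
  ring

-- nonexistence lemmas
lemma not_neg1 (f : GI → ℂ) (hne : f ≠ 0) (hdx : ∀ z : GI, dx f z = (-1) * f z) : False := by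
  apply hne
  funext z
  have h := hdx (z - 1)
  simp only [dx] at h
  have hz : z - 1 + 1 = z := by ring
  rw [hz] at h
  simpa using by linear_combination h

lemma keyrel (f : GI → ℂ) (lam : ℂ) (hDA : DA f) (hdx : ∀ z : GI, dx f z = lam * f z)
    (z : GI) :
    ((1 + lam) * f (z + Ii) - f z) * (1 - I) = ((1 + lam) * f z - f (z + Ii)) * (1 + I) := by
  have h := hDA z
  have h1 := hdx z
  have h2 := hdx (z + Ii)
  simp only [dx] at h1 h2
  have hz : z + 1 + Ii = z + Ii + 1 := by ring
  rw [hz] at h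
  rw [div_eq_div_iff h1pI h1mI] at h
  linear_combination h - (1-I)*h2 + (1+I)*h1

lemma not_m2ap (f : GI → ℂ) (hDA : DA f) (hne : f ≠ 0)
    (hdx : ∀ z : GI, dx f z = (-2*ap) * f z) : False := by
  apply hne
  funext z
  have h := keyrel f (-2*ap) hDA hdx z
  have hI := Complex.I_sq
  simp only [ap] at h
  have : (2*I - 2) * f z = 0 := by linear_combination h + (f (z+Ii) - f z - 2*f (z+Ii)) * hI
  have h2 : (2*I - 2 : ℂ) ≠ 0 := by
    intro hc; have := congrArg Complex.im hc; simp at this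
  simpa using (mul_eq_zero.mp this).resolve_left h2

lemma not_m2am (f : GI → ℂ) (hDA : DA f) (hne : f ≠ 0)
    (hdx : ∀ z : GI, dx f z = (-2*am) * f z) : False := by
  apply hne
  funext z
  have h := keyrel f (-2*am) hDA hdx (z - Ii)
  have hI := Complex.I_sq
  have hz : z - Ii + Ii = z := by ring
  rw [hz] at h
  simp only [am] at h
  have : (2*I + 2) * f z = 0 := by linear_combination h + (f (z-Ii) - f z + 2*f z) * hI
  have h2 : (2*I + 2 : ℂ) ≠ 0 := by
    intro hc; have := congrArg Complex.im hc; simp at this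
  simpa using (mul_eq_zero.mp this).resolve_left h2

/-- for λ ∉ {−1, −2α₊, −2α₋} the function e_λ is discrete analytic on Λ,
satisfies e_λ(0) = 1 and δ_x e_λ = λ·e_λ.  Hence the set of eigenvalues of δ_x on the
space of ℂ-valued discrete analytic functions on Λ is exactly ℂ \ {−1, −2α₊, −2α₋}. -/
theorem stmt3 :
    (∀ lam : ℂ, lam ≠ -1 → lam ≠ -2 * ap → lam ≠ -2 * am →
      (1 + lam ≠ 0 ∧ 1 + am * lam ≠ 0) ∧
      DA (eFun lam) ∧
      eFun lam 0 = 1 ∧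
      (∀ z : GI, dx (eFun lam) z = lam * eFun lam z)) ∧
    (∀ lam : ℂ,
      (∃ f : GI → ℂ, DA f ∧ f ≠ 0 ∧ ∀ z : GI, dx f z = lam * f z) ↔
        (lam ≠ -1 ∧ lam ≠ -2 * ap ∧ lam ≠ -2 * am)) := by
  have main : ∀ lam : ℂ, lam ≠ -1 → lam ≠ -2 * ap → lam ≠ -2 * am →
      (1 + lam ≠ 0 ∧ 1 + am * lam ≠ 0) ∧
      DA (eFun lam) ∧
      eFun lam 0 = 1 ∧
      (∀ z : GI, dx (eFun lam) z = lam * eFun lam z) := by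
    intro lam hl1 hl2 hl3
    have h1 : 1 + lam ≠ 0 := fun h => hl1 (by linear_combination h)
    have hm := hne_am lam hl2
    have hp := hne_ap lam hl3
    exact ⟨⟨h1, hm⟩, DA_eFun lam h1 hp hm, eFun_zero lam, dx_eFun lam h1⟩
  refine ⟨main, fun lam => ⟨?_, ?_⟩⟩
  · rintro ⟨f, hDA, hne, hdx⟩
    refine ⟨?_, ?_, ?_⟩
    · rintro rfl; exact not_neg1 f hne hdx
    · rintro rfl; exact not_m2ap f hDA hne hdx
    · rintro rfl; exact not_m2am f hDA hne hdx
  · rintro ⟨hl1, hl2, hl3⟩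
    obtain ⟨_, hDA, h0, hdx⟩ := main lam hl1 hl2 hl3
    refine ⟨eFun lam, hDA, ?_, hdx⟩
    intro hc
    rw [hc] at h0
    simp at h0
end
end

section
/- Let f : Λ → ℂ be discrete analytic on Λ, not identically zero, and suppose δ_y f = μ·f for some μ ∈ ℂ. Then μ ∉ {−1, −2α₊, −2α₋}; moreover 1 + α₊μ ≠ 0, and setting λ = −iμ/(1+α₊μ) one has λ ∉ {−1, −2α₊, −2α₋} and f(z) = f(0)·e_λ(z) for all z ∈ Λ. Consequently every eigenspace of δ_y on the space of discrete analytic functions on Λ is one-dimensional. -/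
open Complex

noncomputable section

/-- Iterating a one-step multiplicative recursion along integer multiples of `w`. -/
lemma rec_gen (f : GI → ℂ) (w : GI) (r : ℂ) (hr : r ≠ 0)
    (h : ∀ z : GI, f (z + w) = r * f z) (z : GI) (n : ℤ) :
    f (z + n • w) = r ^ n * f z := by
  induction n using Int.induction_on with
  | zero => simp
  | succ k ih =>
      have e : z + ((k : ℤ) + 1) • w = (z + (k:ℤ) • w) + w := by
        rw [add_zsmul, one_zsmul, add_assoc]
      rw [e, h, ih, zpow_add_one₀ hr]; ring
  | pred k ih =>
      have e : (z + (-(k:ℤ) - 1) • w) + w = z + (-(k:ℤ)) • w := by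
        rw [sub_zsmul, one_zsmul]; abel
      have h2 := h (z + (-(k:ℤ) - 1) • w)
      rw [e, ih] at h2
      have h3 : f (z + (-(k:ℤ) - 1) • w) = r⁻¹ * (r ^ (-(k:ℤ)) * f z) := by
        rw [eq_inv_mul_iff_mul_eq₀ hr]; exact h2.symm
      rw [h3, zpow_sub_one₀ hr]; ring

/-- The key structural result for δ_y-eigenfunctions among discrete analytic functions. -/
lemma key (f : GI → ℂ) (mu : ℂ) (hf : DA f) (hf0 : f ≠ 0)
    (heig : ∀ z : GI, dy f z = mu * f z) :
    (mu ≠ -1 ∧ mu ≠ -2 * ap ∧ mu ≠ -2 * am) ∧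
    1 + ap * mu ≠ 0 ∧
    ((-I * mu / (1 + ap * mu)) ≠ -1 ∧ (-I * mu / (1 + ap * mu)) ≠ -2 * ap ∧
      (-I * mu / (1 + ap * mu)) ≠ -2 * am) ∧
    (∀ z : GI, f z = f 0 * eFun (-I * mu / (1 + ap * mu)) z) ∧ f 0 ≠ 0 := by
  have hI2 : I * I = -1 := Complex.I_mul_I
  have hIp : (1:ℂ) + I ≠ 0 := by
    intro h; have := congrArg Complex.im h; simp at this
  have hIm : (1:ℂ) - I ≠ 0 := by
    intro h; have := congrArg Complex.im h; simp at this
  have hap2 : ap * 2 = 1 + I := by simp only [ap]; ring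
  have ham2 : am * 2 = 1 - I := by simp only [am]; ring
  have hy : ∀ z : GI, f (z + Ii) = (1 + mu) * f z := by
    intro z; have := heig z; simp only [dy] at this; linear_combination this
  have hs : (1:ℂ) + mu ≠ 0 := by
    intro h; apply hf0; funext w
    have := hy (w - Ii)
    rw [sub_add_cancel, h, zero_mul] at this
    exact this
  have hx : ∀ z : GI, ((1-I)*mu - 2*I) * f (z+1) = (-2*I - (1+I)*mu) * f z := by
    intro z
    have h0 := hf z
    rw [hy (z+1), hy z] at h0
    field_simp at h0
    linear_combination h0
  have hA : ((1:ℂ)-I)*mu - 2*I ≠ 0 := by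
    intro h
    have hB : (-2*I - (1+I)*mu) * ((1:ℂ)-I) = -4*I := by
      linear_combination (-1-I) * h
    apply hf0; funext w
    have := hx w
    rw [h, zero_mul] at this
    have hBne : (-2*I - (1+I)*mu) ≠ 0 := by
      intro h2; rw [h2, zero_mul] at hB; simpa using hB.symm
    exact (mul_eq_zero.mp this.symm).resolve_left hBne
  have hB : (-2*I - (1+I)*mu) ≠ 0 := by
    intro h
    apply hf0; funext w
    have := hx (w - 1)
    rw [sub_add_cancel, h, zero_mul] at this
    exact (mul_eq_zero.mp this).resolve_left hA
  have hArel : ((1:ℂ)-I)*mu - 2*I = -2*I*(1+ap*mu) := by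
    linear_combination mu * hI2 + (I*mu) * hap2
  have hap : (1:ℂ) + ap*mu ≠ 0 := by
    intro h; apply hA; rw [hArel, h, mul_zero]
  set lam : ℂ := -I * mu / (1 + ap * mu) with hlam
  have h1lam : (1:ℂ) + lam = (-2*I - (1+I)*mu)/((1-I)*mu - 2*I) := by
    rw [hlam, add_div' _ _ _ hap, div_eq_div_iff hap hA]
    linear_combination (1 + ap*mu - I*mu) * hArel + (1+ap*mu)*mu*(-I)*hap2 + (1+ap*mu)*mu*hI2
  have hamlam : ((1:ℂ) + am*lam) * (1 + ap*mu) = 1 := by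
    rw [hlam, add_mul, mul_assoc, div_mul_cancel₀ _ hap]
    linear_combination (mu/2)*hap2 - (mu*I/2)*ham2 + (mu/2)*hI2
  have haplam : ((1:ℂ) + ap*lam) * (1 + ap*mu) = 1 + mu := by
    rw [hlam]
    field_simp
    linear_combination (mu*(1-I)/2)*hap2 - (mu/2)*hI2
  have hamlam_ne : (1:ℂ) + am*lam ≠ 0 := by
    intro h; rw [h, zero_mul] at hamlam; simpa using hamlam.symm
  have haplam_ne : (1:ℂ) + ap*lam ≠ 0 := by
    intro h; rw [h, zero_mul] at haplam; exact hs haplam.symm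
  have hratio : ((1:ℂ) + ap*lam)/(1 + am*lam) = 1 + mu := by
    rw [div_eq_iff hamlam_ne]
    apply mul_right_cancel₀ hap
    rw [haplam, mul_assoc, hamlam, mul_one]
  have hmu1 : mu ≠ -1 := by intro h; exact hs (by rw [h]; ring)
  have hmu2 : mu ≠ -2*ap := by
    intro h; apply hB; linear_combination hI2 + (1+I)*hap2 + (-1-I)*h
  have hmu3 : mu ≠ -2*am := by
    intro h; apply hA; linear_combination -hI2 + (I-1)*ham2 + (1-I)*h
  have hlam1 : lam ≠ -1 := by
    intro h
    rw [h] at h1lam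
    apply hB
    have := h1lam.symm
    rw [div_eq_iff hA] at this
    linear_combination this
  have hlam2 : lam ≠ -2*ap := by
    intro h; apply hamlam_ne; rw [h]
    linear_combination (-am)*hap2 - ((1+I)/2)*ham2 + (1/2)*hI2
  have hlam3 : lam ≠ -2*am := by
    intro h; apply haplam_ne; rw [h]
    linear_combination (-ap)*ham2 - ((1-I)/2)*hap2 + (1/2)*hI2
  -- the explicit formula
  have hrne : (-2*I - (1+I)*mu)/((1-I)*mu - 2*I) ≠ 0 := div_ne_zero hB hA
  have hstep : ∀ z : GI, f (z + 1) =
      ((-2*I - (1+I)*mu)/((1-I)*mu - 2*I)) * f z := by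
    intro z
    rw [div_mul_eq_mul_div, eq_div_iff hA]
    linear_combination hx z
  have hform : ∀ z : GI, f z =
      (1+mu)^z.im * (((-2*I - (1+I)*mu)/((1-I)*mu - 2*I))^z.re * f 0) := by
    intro z
    have e : ((0:GI) + z.re • (1:GI)) + z.im • Ii = z := by
      ext <;> simp [Ii, Zsqrtd.ext_iff]
    rw [← e, rec_gen f Ii (1+mu) hs hy _ z.im,
      rec_gen f 1 _ hrne hstep 0 z.re, e]
  have hf00 : f 0 ≠ 0 := by
    intro h; apply hf0; funext w
    show f w = 0
    rw [hform w, h, mul_zero, mul_zero]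
  refine ⟨⟨hmu1, hmu2, hmu3⟩, hap, ⟨hlam1, hlam2, hlam3⟩, ?_, hf00⟩
  intro z
  rw [eFun, hratio, h1lam, hform z]
  ring

/-- if `f` is discrete analytic on Λ, not identically zero, and is an
eigenfunction of δ_y with eigenvalue μ, then μ ∉ {−1, −2α₊, −2α₋}, 1+α₊μ ≠ 0, and
with λ = −iμ/(1+α₊μ) one has λ ∉ {−1, −2α₊, −2α₋} and f = f(0)·e_λ.  Consequently
every eigenspace of δ_y on the discrete analytic functions on Λ is one-dimensional. -/
theorem stmt4 (f : GI → ℂ) (mu : ℂ) (hf : DA f) (hf0 : f ≠ 0)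
    (heig : ∀ z : GI, dy f z = mu * f z) :
    (mu ≠ -1 ∧ mu ≠ -2 * ap ∧ mu ≠ -2 * am) ∧
    1 + ap * mu ≠ 0 ∧
    ((-I * mu / (1 + ap * mu)) ≠ -1 ∧ (-I * mu / (1 + ap * mu)) ≠ -2 * ap ∧
      (-I * mu / (1 + ap * mu)) ≠ -2 * am) ∧
    (∀ z : GI, f z = f 0 * eFun (-I * mu / (1 + ap * mu)) z) ∧
    (∀ (nu : ℂ) (g h : GI → ℂ), DA g → DA h → g ≠ 0 →
      (∀ z : GI, dy g z = nu * g z) → (∀ z : GI, dy h z = nu * h z) →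
      ∃ c : ℂ, ∀ z : GI, h z = c * g z) := by
  obtain ⟨c1, c2, c3, c4, -⟩ := key f mu hf hf0 heig
  refine ⟨c1, c2, c3, c4, ?_⟩
  intro nu g h hg hh hgne hge hhe
  by_cases hh0 : h = 0
  · exact ⟨0, fun z => by rw [hh0]; simp⟩
  · obtain ⟨-, -, -, hgform, hg00⟩ := key g nu hg hgne hge
    obtain ⟨-, -, -, hhform, -⟩ := key h nu hh hh0 hhe
    refine ⟨h 0 / g 0, fun z => ?_⟩
    rw [hhform z, hgform z]
    field_simp
end
end

section
/- Let p : ℕ → (Λ → ℂ) be the standard basis of discrete analytic polynomials. Then for every z ∈ Λ and every λ ∈ ℂ with |λ| < 1, the series Σ_{n=0}^{∞} λⁿ · p n (z) converges and its sum equals e_λ(z) = (1+λ)^{Re z} · ((1+α₊λ)/(1+α₋λ))^{Im z} (note that |λ| < 1 guarantees 1+λ ≠ 0 and 1+α₋λ ≠ 0). -/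
open Complex

noncomputable section

/-- The defining property of the standard basis of discrete analytic polynomials
z^(n): each is discrete analytic, p 0 ≡ 1, p (n+1) vanishes at 0, and
δ_x (p (n+1)) = p n. -/
def IsStdBasis (p : ℕ → GI → ℂ) : Prop :=
  (∀ n, DA (p n)) ∧ (∀ z : GI, p 0 z = 1) ∧ (∀ n, p (n + 1) 0 = 0) ∧
    (∀ n, dx (p (n + 1)) = p n)


/-! ### Auxiliary lemmas -/

lemma norm_am_lt : ‖am‖ < 1 := by
  have h : ‖am‖ ^ 2 = 1/2 := by
    rw [Complex.sq_norm, am, Complex.normSq_apply]; norm_num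
  nlinarith [norm_nonneg am]

lemma norm_ap_lt : ‖ap‖ < 1 := by
  have h : ‖ap‖ ^ 2 = 1/2 := by
    rw [Complex.sq_norm, ap, Complex.normSq_apply]; norm_num
  nlinarith [norm_nonneg ap]

lemma one_add_ne {w : ℂ} (h : ‖w‖ < 1) : 1 + w ≠ 0 := by
  intro he
  have hw : w = -1 := by linear_combination he
  rw [hw] at h
  simp at h

lemma gi_add_one (x y : ℤ) : (⟨x, y⟩ : GI) + 1 = ⟨x + 1, y⟩ := by ext <;> simp
lemma gi_sub_one (x y : ℤ) : (⟨x, y⟩ : GI) - 1 = ⟨x - 1, y⟩ := by ext <;> simp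
lemma gi_add_Ii (x y : ℤ) : (⟨x, y⟩ : GI) + Ii = ⟨x, y + 1⟩ := by ext <;> simp [Ii]
lemma gi_sub_Ii (x y : ℤ) : (⟨x, y⟩ : GI) - Ii = ⟨x, y - 1⟩ := by ext <;> simp [Ii]

lemma R1 (p : ℕ → GI → ℂ) (hp : IsStdBasis p) (n : ℕ) (z : GI) :
    p (n + 1) (z + 1) = p (n + 1) z + p n z := by
  have h := congrFun (hp.2.2.2 n) z
  simp only [dx] at h
  linear_combination h

lemma R2 (p : ℕ → GI → ℂ) (hp : IsStdBasis p) (n : ℕ) (z : GI) :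
    p (n + 1) (z + Ii) = p (n + 1) z + ap * p n z - am * p n (z + Ii) := by
  have hda := hp.1 (n + 1) z
  rw [show z + 1 + Ii = z + Ii + 1 by ring] at hda
  rw [R1 p hp n z, R1 p hp n (z + Ii)] at hda
  have hi1 : (1 : ℂ) + I ≠ 0 := by
    intro h; have := congrArg Complex.im h; simp at this
  have hi2 : (1 : ℂ) - I ≠ 0 := by
    intro h; have := congrArg Complex.im h; simp at this
  rw [div_eq_div_iff hi1 hi2] at hda
  rw [ap, am]
  field_simp
  linear_combination hda

lemma bdd_step (a b : ℕ → ℂ) (c2 c3 : ℂ) (h3 : ‖c3‖ ≤ 1)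
    (hrec : ∀ n, a (n + 1) = b (n + 1) + c2 * b n + c3 * a n)
    (hb : ∀ q : ℝ, 1 < q → ∃ C, 0 ≤ C ∧ ∀ n, ‖b n‖ ≤ C * q ^ n) :
    ∀ q : ℝ, 1 < q → ∃ C, 0 ≤ C ∧ ∀ n, ‖a n‖ ≤ C * q ^ n := by
  intro q hq
  obtain ⟨C, hC0, hC⟩ := hb q hq
  have hq0 : (0:ℝ) < q := lt_trans one_pos hq
  set B : ℝ := (1 + ‖c2‖) * C with hB
  have hB0 : 0 ≤ B := by positivity
  set K : ℝ := ‖a 0‖ + B * q / (q - 1) with hK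
  have hq1 : q - 1 ≠ 0 := by linarith
  have hKey : K * (q - 1) = ‖a 0‖ * (q - 1) + B * q := by
    rw [hK]; field_simp
  have hdiv : 0 ≤ B * q / (q - 1) := div_nonneg (by positivity) (by linarith)
  have hK0 : 0 ≤ K := by rw [hK]; positivity
  refine ⟨K, hK0, ?_⟩
  intro n
  induction n with
  | zero =>
    simp only [pow_zero, mul_one, hK]
    linarith
  | succ n ih =>
    have h1 : ‖a (n + 1)‖ ≤ ‖b (n + 1)‖ + ‖c2‖ * ‖b n‖ + ‖a n‖ := by
      rw [hrec n]
      calc ‖b (n + 1) + c2 * b n + c3 * a n‖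
          ≤ ‖b (n + 1) + c2 * b n‖ + ‖c3 * a n‖ := norm_add_le _ _
        _ ≤ (‖b (n + 1)‖ + ‖c2 * b n‖) + ‖c3 * a n‖ := by
            gcongr; exact norm_add_le _ _
        _ ≤ ‖b (n + 1)‖ + ‖c2‖ * ‖b n‖ + ‖a n‖ := by
            rw [norm_mul, norm_mul]
            have : ‖c3‖ * ‖a n‖ ≤ 1 * ‖a n‖ :=
              mul_le_mul_of_nonneg_right h3 (norm_nonneg _)
            linarith
    have e1 : ‖b (n + 1)‖ ≤ C * (q ^ n * q) := by
      rw [← pow_succ]; exact hC (n + 1)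
    have e2 : ‖b n‖ ≤ C * q ^ n := hC n
    have hqn : (0:ℝ) < q ^ n := pow_pos hq0 n
    have hqn1 : (1:ℝ) ≤ q ^ n := one_le_pow₀ hq.le
    have h5 : B * q + K ≤ K * q := by
      have hA : 0 ≤ ‖a 0‖ * (q - 1) := mul_nonneg (norm_nonneg _) (by linarith)
      nlinarith [hKey]
    have key2 : C * (q ^ n * q) + ‖c2‖ * C * (q ^ n * q) + K * q ^ n ≤ K * (q ^ n * q) := by
      calc C * (q ^ n * q) + ‖c2‖ * C * (q ^ n * q) + K * q ^ n
          = (B * q + K) * q ^ n := by rw [hB]; ring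
        _ ≤ (K * q) * q ^ n := mul_le_mul_of_nonneg_right h5 hqn.le
        _ = K * (q ^ n * q) := by ring
    have e3 : ‖c2‖ * ‖b n‖ ≤ ‖c2‖ * (C * q ^ n) :=
      mul_le_mul_of_nonneg_left e2 (norm_nonneg _)
    have e4 : ‖c2‖ * (C * q ^ n) ≤ ‖c2‖ * C * (q ^ n * q) := by
      nlinarith [mul_nonneg (mul_nonneg (norm_nonneg c2) hC0) hqn.le]
    rw [pow_succ]
    linarith

/-- The growth bound property. -/
def Bdd (p : ℕ → GI → ℂ) (z : GI) : Prop :=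
  ∀ q : ℝ, 1 < q → ∃ C, 0 ≤ C ∧ ∀ n, ‖p n z‖ ≤ C * q ^ n

lemma bdd_zero (p : ℕ → GI → ℂ) (hp : IsStdBasis p) : Bdd p 0 := by
  intro q hq
  refine ⟨1, zero_le_one, ?_⟩
  intro n
  have hqn1 : (1:ℝ) ≤ q ^ n := one_le_pow₀ hq.le
  cases n with
  | zero => simp [hp.2.1]
  | succ m => simp [hp.2.2.1 m]; positivity

lemma bdd_xp (p : ℕ → GI → ℂ) (hp : IsStdBasis p) (z : GI) (h : Bdd p z) :
    Bdd p (z + 1) := by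
  refine bdd_step (fun n => p n (z + 1)) (fun n => p n z) 1 0 (by simp) ?_ h
  intro n
  show p (n + 1) (z + 1) = p (n + 1) z + 1 * p n z + 0 * p n (z + 1)
  rw [R1 p hp n z]; ring

lemma bdd_xm (p : ℕ → GI → ℂ) (hp : IsStdBasis p) (z : GI) (h : Bdd p z) :
    Bdd p (z - 1) := by
  refine bdd_step (fun n => p n (z - 1)) (fun n => p n z) 0 (-1) (by simp) ?_ h
  intro n
  show p (n + 1) (z - 1) = p (n + 1) z + 0 * p n z + -1 * p n (z - 1)
  have := R1 p hp n (z - 1)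
  rw [sub_add_cancel] at this
  linear_combination -this

lemma bdd_yp (p : ℕ → GI → ℂ) (hp : IsStdBasis p) (z : GI) (h : Bdd p z) :
    Bdd p (z + Ii) := by
  refine bdd_step (fun n => p n (z + Ii)) (fun n => p n z) ap (-am)
    (by rw [norm_neg]; exact norm_am_lt.le) ?_ h
  intro n
  show p (n + 1) (z + Ii) = p (n + 1) z + ap * p n z + -am * p n (z + Ii)
  linear_combination R2 p hp n z

lemma bdd_ym (p : ℕ → GI → ℂ) (hp : IsStdBasis p) (z : GI) (h : Bdd p z) :
    Bdd p (z - Ii) := by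
  refine bdd_step (fun n => p n (z - Ii)) (fun n => p n z) am (-ap) ?_ ?_ h
  · rw [norm_neg]; exact le_of_lt norm_ap_lt
  intro n
  show p (n + 1) (z - Ii) = p (n + 1) z + am * p n z + -ap * p n (z - Ii)
  have := R2 p hp n (z - Ii)
  rw [sub_add_cancel] at this
  linear_combination -this

lemma bdd_all (p : ℕ → GI → ℂ) (hp : IsStdBasis p) : ∀ z : GI, Bdd p z := by
  intro z
  obtain ⟨x, y⟩ := z
  have hx : ∀ x : ℤ, Bdd p ⟨x, 0⟩ := by
    intro x
    induction x using Int.induction_on with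
    | zero => exact bdd_zero p hp
    | succ k ih => rw [← gi_add_one]; exact bdd_xp p hp _ ih
    | pred k ih => rw [← gi_sub_one]; exact bdd_xm p hp _ ih
  induction y using Int.induction_on with
  | zero => exact hx x
  | succ k ih => rw [← gi_add_Ii]; exact bdd_yp p hp _ ih
  | pred k ih => rw [← gi_sub_Ii]; exact bdd_ym p hp _ ih

lemma summ (p : ℕ → GI → ℂ) (hp : IsStdBasis p) {lam : ℂ} (hlam : ‖lam‖ < 1)
    (z : GI) : Summable (fun n => lam ^ n * p n z) := by
  rcases eq_or_ne lam 0 with h | h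
  · subst h
    apply summable_of_ne_finset_zero (s := {0})
    intro n hn
    simp only [Finset.mem_singleton] at hn
    simp [zero_pow hn]
  · have hl : 0 < ‖lam‖ := norm_pos_iff.mpr h
    set r : ℝ := (1 + ‖lam‖) / 2 with hr
    have hr1 : r < 1 := by rw [hr]; linarith
    have hrl : ‖lam‖ < r := by rw [hr]; linarith
    have hr0 : 0 < r := by rw [hr]; linarith
    set q : ℝ := r / ‖lam‖ with hq
    have hq1 : 1 < q := (one_lt_div hl).mpr hrl
    obtain ⟨C, hC0, hC⟩ := bdd_all p hp z q hq1
    apply Summable.of_norm_bounded (g := fun n => C * r ^ n)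
      ((summable_geometric_of_lt_one hr0.le hr1).mul_left C)
    intro n
    rw [norm_mul, norm_pow]
    have hlq : ‖lam‖ * q = r := by
      rw [hq, mul_comm, div_mul_cancel₀ r (ne_of_gt hl)]
    calc ‖lam‖ ^ n * ‖p n z‖ ≤ ‖lam‖ ^ n * (C * q ^ n) := by
          exact mul_le_mul_of_nonneg_left (hC n) (pow_nonneg (norm_nonneg _) n)
      _ = C * (‖lam‖ * q) ^ n := by rw [mul_pow]; ring
      _ = C * r ^ n := by rw [hlq]

lemma idX (p : ℕ → GI → ℂ) (hp : IsStdBasis p) (lam : ℂ) (z : GI) (N : ℕ) :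
    (∑ n ∈ Finset.range (N + 1), lam ^ n * p n (z + 1)) =
      (∑ n ∈ Finset.range (N + 1), lam ^ n * p n z) +
        lam * ∑ n ∈ Finset.range N, lam ^ n * p n z := by
  induction N with
  | zero => simp [hp.2.1]
  | succ N ih =>
    rw [Finset.sum_range_succ (fun n => lam ^ n * p n (z + 1)) (N + 1),
      Finset.sum_range_succ (fun n => lam ^ n * p n z) (N + 1), ih,
      Finset.sum_range_succ (fun n => lam ^ n * p n z) N, R1 p hp N z]
    ring

lemma idY (p : ℕ → GI → ℂ) (hp : IsStdBasis p) (lam : ℂ) (z : GI) (N : ℕ) :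
    (∑ n ∈ Finset.range (N + 1), lam ^ n * p n (z + Ii)) =
      (∑ n ∈ Finset.range (N + 1), lam ^ n * p n z) +
        ap * lam * (∑ n ∈ Finset.range N, lam ^ n * p n z) -
        am * lam * ∑ n ∈ Finset.range N, lam ^ n * p n (z + Ii) := by
  induction N with
  | zero => simp [hp.2.1]
  | succ N ih =>
    have e3 := Finset.sum_range_succ (fun n => lam ^ n * p n z) N
    have e4 := Finset.sum_range_succ (fun n => lam ^ n * p n (z + Ii)) N
    rw [Finset.sum_range_succ (fun n => lam ^ n * p n (z + Ii)) (N + 1),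
      Finset.sum_range_succ (fun n => lam ^ n * p n z) (N + 1)]
    linear_combination ih + lam ^ (N + 1) * (R2 p hp N z) - ap * lam * e3 +
      am * lam * e4

lemma zpow_rec (f : ℤ → ℂ) (c : ℂ) (hc : c ≠ 0)
    (h : ∀ n : ℤ, f (n + 1) = c * f n) : ∀ n : ℤ, f n = c ^ n * f 0 := by
  intro n
  induction n using Int.induction_on with
  | zero => simp
  | succ k ih => rw [h k, ih, zpow_add_one₀ hc]; ring
  | pred k ih =>
    have h' := h (-(k : ℤ) - 1)
    rw [show -(k : ℤ) - 1 + 1 = -(k : ℤ) by ring, ih] at h'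
    apply mul_left_cancel₀ hc
    rw [← h', zpow_sub_one₀ hc]
    field_simp

/-- for every z ∈ Λ and |λ| < 1 the series Σ λⁿ p n (z) converges to
e_λ(z). -/
theorem stmt7 (p : ℕ → GI → ℂ) (hp : IsStdBasis p) :
    ∀ (z : GI) (lam : ℂ), ‖lam‖ < 1 →
      Filter.Tendsto (fun N => ∑ n ∈ Finset.range N, lam ^ n * p n z)
        Filter.atTop (nhds (eFun lam z)) := by
  intro z lam hlam
  set L : GI → ℂ := fun w => ∑' n, lam ^ n * p n w with hL
  have hten : ∀ w, Filter.Tendsto (fun N => ∑ n ∈ Finset.range N, lam ^ n * p n w)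
      Filter.atTop (nhds (L w)) :=
    fun w => (summ p hp hlam w).hasSum.tendsto_sum_nat
  suffices hLe : L z = eFun lam z by rw [← hLe]; exact hten z
  have h1 : (1 : ℂ) + lam ≠ 0 := one_add_ne hlam
  have h2 : (1 : ℂ) + am * lam ≠ 0 := by
    apply one_add_ne
    rw [norm_mul]
    calc ‖am‖ * ‖lam‖ ≤ 1 * ‖lam‖ :=
        mul_le_mul_of_nonneg_right norm_am_lt.le (norm_nonneg _)
      _ < 1 := by simpa using hlam
  have h3 : (1 : ℂ) + ap * lam ≠ 0 := by
    apply one_add_ne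
    rw [norm_mul]
    calc ‖ap‖ * ‖lam‖ ≤ 1 * ‖lam‖ :=
        mul_le_mul_of_nonneg_right norm_ap_lt.le (norm_nonneg _)
      _ < 1 := by simpa using hlam
  have hx : ∀ w, L (w + 1) = (1 + lam) * L w := by
    intro w
    have t1 : Filter.Tendsto
        (fun N => ∑ n ∈ Finset.range (N + 1), lam ^ n * p n (w + 1))
        Filter.atTop (nhds (L (w + 1))) :=
      (hten (w + 1)).comp (Filter.tendsto_add_atTop_nat 1)
    have t2 : Filter.Tendsto
        (fun N => (∑ n ∈ Finset.range (N + 1), lam ^ n * p n w) +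
          lam * ∑ n ∈ Finset.range N, lam ^ n * p n w)
        Filter.atTop (nhds (L w + lam * L w)) :=
      ((hten w).comp (Filter.tendsto_add_atTop_nat 1)).add ((hten w).const_mul lam)
    have := tendsto_nhds_unique (t1.congr (fun N => idX p hp lam w N)) t2
    rw [this]; ring
  have hy : ∀ w, L (w + Ii) = ((1 + ap * lam) / (1 + am * lam)) * L w := by
    intro w
    have t1 : Filter.Tendsto
        (fun N => ∑ n ∈ Finset.range (N + 1), lam ^ n * p n (w + Ii))
        Filter.atTop (nhds (L (w + Ii))) :=
      (hten (w + Ii)).comp (Filter.tendsto_add_atTop_nat 1)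
    have t2 : Filter.Tendsto
        (fun N => (∑ n ∈ Finset.range (N + 1), lam ^ n * p n w) +
          ap * lam * (∑ n ∈ Finset.range N, lam ^ n * p n w) -
          am * lam * ∑ n ∈ Finset.range N, lam ^ n * p n (w + Ii))
        Filter.atTop
        (nhds (L w + ap * lam * L w - am * lam * L (w + Ii))) :=
      (((hten w).comp (Filter.tendsto_add_atTop_nat 1)).add
        ((hten w).const_mul (ap * lam))).sub ((hten (w + Ii)).const_mul (am * lam))
    have heq := tendsto_nhds_unique (t1.congr (fun N => idY p hp lam w N)) t2
    rw [div_mul_eq_mul_div, eq_div_iff h2]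
    linear_combination heq
  have hL0 : L 0 = 1 := by
    rw [hL]
    simp only
    rw [tsum_eq_single 0 ?_]
    · simp [hp.2.1]
    · intro n hn
      cases n with
      | zero => exact absurd rfl hn
      | succ m => simp [hp.2.2.1 m]
  obtain ⟨x, y⟩ := z
  have hrow : ∀ (y : ℤ) (t : ℤ), L ⟨t, y⟩ = (1 + lam) ^ t * L ⟨0, y⟩ := by
    intro y
    apply zpow_rec (fun t : ℤ => L ⟨t, y⟩) (1 + lam) h1
    intro n
    show L ⟨n + 1, y⟩ = (1 + lam) * L ⟨n, y⟩
    rw [← gi_add_one]; exact hx ⟨n, y⟩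
  have hcol : ∀ t : ℤ, L ⟨0, t⟩ = ((1 + ap * lam) / (1 + am * lam)) ^ t * L ⟨0, 0⟩ := by
    apply zpow_rec (fun t : ℤ => L ⟨0, t⟩) _ (div_ne_zero h3 h2)
    intro n
    show L ⟨0, n + 1⟩ = ((1 + ap * lam) / (1 + am * lam)) * L ⟨0, n⟩
    rw [← gi_add_Ii]; exact hy ⟨0, n⟩
  have h00 : L ⟨0, 0⟩ = 1 := hL0
  rw [hrow y x, hcol y, h00, eFun]
  ring
end
end

section
/- Let p : ℕ → (Λ → ℂ) be the standard basis of discrete analytic polynomials. Then for every z ∈ Λ with Re z ≥ 0 and every λ ∈ ℂ with |λ| < √2 and λ ≠ −1, the series Σ_{n=0}^{∞} λⁿ · p n (z) converges and its sum equals e_λ(z) = (1+λ)^{Re z} · ((1+α₊λ)/(1+α₋λ))^{Im z}. In particular, for every z in the right half-lattice Λ₊, limsup_{n→∞} |p n (z)|^{1/n} ≤ 1/√2. -/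
open Complex

noncomputable section

open Filter

-- basic facts
lemma hdx' (p : ℕ → GI → ℂ) (hp : IsStdBasis p) (n : ℕ) (z : GI) :
    p (n+1) (z+1) = p (n+1) z + p n z := by
  have := congrFun (hp.2.2.2 n) z
  simp only [dx] at this
  linear_combination this

lemma vert (p : ℕ → GI → ℂ) (hp : IsStdBasis p) (n : ℕ) (z : GI) :
    p (n+1) (z + Ii) = p (n+1) z + ((1+I) * p n z - (1-I) * p n (z+Ii))/2 := by
  have hda := hp.1 (n+1) z
  have h1 := hdx' p hp n z
  have h2 := hdx' p hp n (z + Ii)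
  have e1 : z + 1 + Ii = (z + Ii) + 1 := by ring
  rw [e1, h2, h1] at hda
  have hne1 : (1:ℂ) + I ≠ 0 := by
    intro h; have := congrArg Complex.im h; simp at this
  have hne2 : (1:ℂ) - I ≠ 0 := by
    intro h; have := congrArg Complex.im h; simp at this
  field_simp at hda
  linear_combination hda/2

lemma vertD (p : ℕ → GI → ℂ) (hp : IsStdBasis p) (n : ℕ) (z : GI) :
    p (n+1) (z - Ii) = p (n+1) z + ((1-I) * p n z - (1+I) * p n (z-Ii))/2 := by
  have h := vert p hp n (z - Ii)
  rw [sub_add_cancel] at h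
  linear_combination -h

lemma identX (p : ℕ → GI → ℂ) (hp : IsStdBasis p) (lam : ℂ) (z : GI) (M : ℕ) :
    ∑ n ∈ Finset.range (M+1), lam^n * p n (z+1)
      = ∑ n ∈ Finset.range (M+1), lam^n * p n z
        + lam * ∑ n ∈ Finset.range M, lam^n * p n z := by
  rw [Finset.sum_range_succ' (fun n => lam^n * p n (z+1)) M,
      Finset.sum_range_succ' (fun n => lam^n * p n z) M]
  have h : ∀ i, lam^(i+1) * p (i+1) (z+1)
      = lam^(i+1) * p (i+1) z + lam * (lam^i * p i z) := by
    intro i; rw [hdx' p hp]; ring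
  rw [Finset.sum_congr rfl (fun i _ => h i), Finset.sum_add_distrib, ← Finset.mul_sum,
 ]
  simp only [hp.2.1]
  ring

lemma identY (p : ℕ → GI → ℂ) (hp : IsStdBasis p) (lam : ℂ) (z : GI) (M : ℕ) :
    ∑ n ∈ Finset.range (M+1), lam^n * p n (z+Ii)
      = ∑ n ∈ Finset.range (M+1), lam^n * p n z
        + ap * lam * ∑ n ∈ Finset.range M, lam^n * p n z
        - am * lam * ∑ n ∈ Finset.range M, lam^n * p n (z+Ii) := by
  rw [Finset.sum_range_succ' (fun n => lam^n * p n (z+Ii)) M,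
      Finset.sum_range_succ' (fun n => lam^n * p n z) M]
  have h : ∀ i, lam^(i+1) * p (i+1) (z+Ii)
      = lam^(i+1) * p (i+1) z + ap * lam * (lam^i * p i z)
        - am * lam * (lam^i * p i (z+Ii)) := by
    intro i; rw [vert p hp]; simp only [ap, am]; ring
  rw [Finset.sum_congr rfl (fun i _ => h i), Finset.sum_sub_distrib,
    Finset.sum_add_distrib, ← Finset.mul_sum, ← Finset.mul_sum]
  simp only [hp.2.1]
  ring

lemma identYD (p : ℕ → GI → ℂ) (hp : IsStdBasis p) (lam : ℂ) (z : GI) (M : ℕ) :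
    ∑ n ∈ Finset.range (M+1), lam^n * p n (z-Ii)
      = ∑ n ∈ Finset.range (M+1), lam^n * p n z
        + am * lam * ∑ n ∈ Finset.range M, lam^n * p n z
        - ap * lam * ∑ n ∈ Finset.range M, lam^n * p n (z-Ii) := by
  rw [Finset.sum_range_succ' (fun n => lam^n * p n (z-Ii)) M,
      Finset.sum_range_succ' (fun n => lam^n * p n z) M]
  have h : ∀ i, lam^(i+1) * p (i+1) (z-Ii)
      = lam^(i+1) * p (i+1) z + am * lam * (lam^i * p i z)
        - ap * lam * (lam^i * p i (z-Ii)) := by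
    intro i; rw [vertD p hp]; simp only [ap, am]; ring
  rw [Finset.sum_congr rfl (fun i _ => h i), Finset.sum_sub_distrib,
    Finset.sum_add_distrib, ← Finset.mul_sum, ← Finset.mul_sum]
  simp only [hp.2.1]
  ring

lemma eFunX (lam : ℂ) (h1 : 1 + lam ≠ 0) (hap0 : 1 + ap*lam ≠ 0) (ham0 : 1 + am*lam ≠ 0)
    (z : GI) : eFun lam (z+1) = (1 + lam) * eFun lam z := by
  have hre : (z+1).re = z.re + 1 := by simp
  have him : (z+1).im = z.im := by simp
  rw [eFun, eFun, hre, him, zpow_add_one₀ h1]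
  ring

lemma eFunU (lam : ℂ) (h1 : 1 + lam ≠ 0) (hap0 : 1 + ap*lam ≠ 0) (ham0 : 1 + am*lam ≠ 0)
    (z : GI) : eFun lam (z+Ii) = ((1 + ap*lam) / (1 + am*lam)) * eFun lam z := by
  have hre : (z+Ii).re = z.re := by simp [Ii]
  have him : (z+Ii).im = z.im + 1 := by simp [Ii]
  have hb : (1 + ap*lam) / (1 + am*lam) ≠ 0 := div_ne_zero hap0 ham0
  rw [eFun, eFun, hre, him, zpow_add_one₀ hb]
  ring

lemma eFunD (lam : ℂ) (h1 : 1 + lam ≠ 0) (hap0 : 1 + ap*lam ≠ 0) (ham0 : 1 + am*lam ≠ 0)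
    (z : GI) : eFun lam (z-Ii) = ((1 + am*lam) / (1 + ap*lam)) * eFun lam z := by
  have hre : (z-Ii).re = z.re := by simp [Ii]
  have him : (z-Ii).im = z.im - 1 := by simp [Ii]
  have hb : (1 + ap*lam) / (1 + am*lam) ≠ 0 := div_ne_zero hap0 ham0
  rw [eFun, eFun, hre, him, zpow_sub_one₀ hb]
  field_simp

lemma auxReal (a e : ℕ → ℝ) (r : ℝ) (hr0 : 0 ≤ r) (hr1 : r < 1)
    (ha0 : ∀ n, 0 ≤ a n) (hrec : ∀ n, a (n+1) ≤ e (n+1) + r * a n)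
    (he : Tendsto e atTop (nhds 0)) : Tendsto a atTop (nhds 0) := by
  rw [Metric.tendsto_atTop] at he ⊢
  intro δ hδ
  obtain ⟨N₀, hN₀⟩ := he ((1-r)*δ/2) (by nlinarith)
  have key : ∀ k, a (N₀ + k) ≤ r^k * a N₀ + δ/2 := by
    intro k
    induction k with
    | zero => simpa using by linarith [ha0 N₀]
    | succ k ih =>
      have h2 := hN₀ (N₀ + k + 1) (by omega)
      rw [Real.dist_eq, sub_zero] at h2
      have h3 : e (N₀+k+1) ≤ (1-r)*δ/2 := (le_abs_self _).trans h2.le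
      have h1 := hrec (N₀ + k)
      have heq : a (N₀ + (k+1)) = a (N₀ + k + 1) := by ring_nf
      rw [heq]
      have hrk : (0:ℝ) ≤ r^k := pow_nonneg hr0 k
      calc a (N₀ + k + 1) ≤ e (N₀+k+1) + r * a (N₀+k) := h1
        _ ≤ (1-r)*δ/2 + r * (r^k * a N₀ + δ/2) := by nlinarith [ha0 (N₀+k)]
        _ = r^(k+1) * a N₀ + δ/2 := by ring
  have hg : Tendsto (fun k => r^k * a N₀) atTop (nhds 0) := by
    simpa using (tendsto_pow_atTop_nhds_zero_of_lt_one hr0 hr1).mul_const (a N₀)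
  obtain ⟨K, hK⟩ := (Metric.tendsto_atTop.1 hg) (δ/2) (by linarith)
  refine ⟨N₀ + K, fun n hn => ?_⟩
  rw [Real.dist_eq, sub_zero, _root_.abs_of_nonneg (ha0 n)]
  have h4 := key (n - N₀)
  rw [Nat.add_sub_cancel' (by omega)] at h4
  have h5 := hK (n - N₀) (by omega)
  rw [Real.dist_eq, sub_zero] at h5
  have := lt_of_le_of_lt (le_abs_self (r^(n-N₀) * a N₀)) h5
  linarith

lemma auxC (c : ℂ) (hc : ‖c‖ < 1) (u v : ℕ → ℂ) (L : ℂ)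
    (hv : Tendsto v atTop (nhds L)) (hrec : ∀ n, u (n+1) = v (n+1) - c * u n) :
    Tendsto u atTop (nhds (L / (1+c))) := by
  have h1c : (1:ℂ) + c ≠ 0 := by
    intro h
    have hc' : c = -1 := by linear_combination h
    rw [hc'] at hc; simp at hc
  have key : Tendsto (fun n => u n - L/(1+c)) atTop (nhds 0) := by
    rw [tendsto_zero_iff_norm_tendsto_zero]
    refine auxReal _ (fun n => ‖v n - L‖) ‖c‖ (norm_nonneg c) hc (fun n => norm_nonneg _)
      (fun n => ?_) ?_
    · have h : u (n+1) - L/(1+c) = (v (n+1) - L) - c * (u n - L/(1+c)) := by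
        rw [hrec n]; field_simp; ring
      rw [h]
      calc ‖(v (n+1) - L) - c * (u n - L/(1+c))‖
          ≤ ‖v (n+1) - L‖ + ‖c * (u n - L/(1+c))‖ := norm_sub_le _ _
        _ = ‖v (n+1) - L‖ + ‖c‖ * ‖u n - L/(1+c)‖ := by rw [norm_mul]
    · have h : Tendsto (fun n => v n - L) atTop (nhds 0) := by
        simpa using hv.sub_const L
      exact tendsto_zero_iff_norm_tendsto_zero.1 h
  have := key.add_const (L/(1+c))
  simpa using this

lemma stepX (p : ℕ → GI → ℂ) (hp : IsStdBasis p) (lam : ℂ) (h1 : 1 + lam ≠ 0)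
    (hap0 : 1 + ap*lam ≠ 0) (ham0 : 1 + am*lam ≠ 0) (z : GI)
    (h : Tendsto (fun N => ∑ n ∈ Finset.range N, lam^n * p n z) atTop (nhds (eFun lam z))) :
    Tendsto (fun N => ∑ n ∈ Finset.range N, lam^n * p n (z+1)) atTop
      (nhds (eFun lam (z+1))) := by
  have ident : ∀ N, (∑ n ∈ Finset.range N, lam^n * p n (z+1))
      = (∑ n ∈ Finset.range N, lam^n * p n z)
        + lam * ∑ n ∈ Finset.range (N-1), lam^n * p n z := by
    intro N
    cases N with
    | zero => simp
    | succ M => simpa using identX p hp lam z M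
  rw [eFunX lam h1 hap0 ham0]
  have lim : Tendsto (fun N => (∑ n ∈ Finset.range N, lam^n * p n z)
      + lam * ∑ n ∈ Finset.range (N-1), lam^n * p n z) atTop
      (nhds (eFun lam z + lam * eFun lam z)) :=
    h.add (Tendsto.const_mul lam (h.comp (tendsto_sub_atTop_nat 1)))
  have he : eFun lam z + lam * eFun lam z = (1+lam) * eFun lam z := by ring
  rw [he] at lim
  exact lim.congr (fun N => (ident N).symm)

lemma stepU (p : ℕ → GI → ℂ) (hp : IsStdBasis p) (lam : ℂ) (h1 : 1 + lam ≠ 0)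
    (hnam : ‖am*lam‖ < 1) (hap0 : 1 + ap*lam ≠ 0) (ham0 : 1 + am*lam ≠ 0) (z : GI)
    (h : Tendsto (fun N => ∑ n ∈ Finset.range N, lam^n * p n z) atTop (nhds (eFun lam z))) :
    Tendsto (fun N => ∑ n ∈ Finset.range N, lam^n * p n (z+Ii)) atTop
      (nhds (eFun lam (z+Ii))) := by
  have hv : Tendsto (fun M => (∑ n ∈ Finset.range M, lam^n * p n z)
      + ap*lam * ∑ n ∈ Finset.range (M-1), lam^n * p n z) atTop
      (nhds (eFun lam z + ap*lam * eFun lam z)) :=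
    h.add (Tendsto.const_mul (ap*lam) (h.comp (tendsto_sub_atTop_nat 1)))
  have hrec : ∀ N, (∑ n ∈ Finset.range (N+1), lam^n * p n (z+Ii))
      = ((∑ n ∈ Finset.range (N+1), lam^n * p n z)
          + ap*lam * ∑ n ∈ Finset.range (N+1-1), lam^n * p n z)
        - am*lam * ∑ n ∈ Finset.range N, lam^n * p n (z+Ii) := by
    intro N
    simp only [Nat.add_sub_cancel]
    linear_combination identY p hp lam z N
  have lim := auxC (am*lam) hnam (fun N => ∑ n ∈ Finset.range N, lam^n * p n (z+Ii)) (fun M => (∑ n ∈ Finset.range M, lam^n * p n z) + ap*lam * ∑ n ∈ Finset.range (M-1), lam^n * p n z) _ hv hrec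
  rw [eFunU lam h1 hap0 ham0]
  have he : ((1 + ap*lam) / (1 + am*lam)) * eFun lam z
      = (eFun lam z + ap*lam * eFun lam z) / (1 + am*lam) := by
    field_simp
  rw [he]
  exact lim

lemma stepD (p : ℕ → GI → ℂ) (hp : IsStdBasis p) (lam : ℂ) (h1 : 1 + lam ≠ 0)
    (hnap : ‖ap*lam‖ < 1) (hap0 : 1 + ap*lam ≠ 0) (ham0 : 1 + am*lam ≠ 0) (z : GI)
    (h : Tendsto (fun N => ∑ n ∈ Finset.range N, lam^n * p n z) atTop (nhds (eFun lam z))) :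
    Tendsto (fun N => ∑ n ∈ Finset.range N, lam^n * p n (z-Ii)) atTop
      (nhds (eFun lam (z-Ii))) := by
  have hv : Tendsto (fun M => (∑ n ∈ Finset.range M, lam^n * p n z)
      + am*lam * ∑ n ∈ Finset.range (M-1), lam^n * p n z) atTop
      (nhds (eFun lam z + am*lam * eFun lam z)) :=
    h.add (Tendsto.const_mul (am*lam) (h.comp (tendsto_sub_atTop_nat 1)))
  have hrec : ∀ N, (∑ n ∈ Finset.range (N+1), lam^n * p n (z-Ii))
      = ((∑ n ∈ Finset.range (N+1), lam^n * p n z)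
          + am*lam * ∑ n ∈ Finset.range (N+1-1), lam^n * p n z)
        - ap*lam * ∑ n ∈ Finset.range N, lam^n * p n (z-Ii) := by
    intro N
    simp only [Nat.add_sub_cancel]
    linear_combination identYD p hp lam z N
  have lim := auxC (ap*lam) hnap (fun N => ∑ n ∈ Finset.range N, lam^n * p n (z-Ii)) (fun M => (∑ n ∈ Finset.range M, lam^n * p n z) + am*lam * ∑ n ∈ Finset.range (M-1), lam^n * p n z) _ hv hrec
  rw [eFunD lam h1 hap0 ham0]
  have he : ((1 + am*lam) / (1 + ap*lam)) * eFun lam z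
      = (eFun lam z + am*lam * eFun lam z) / (1 + ap*lam) := by
    field_simp
  rw [he]
  exact lim

lemma baseConv (p : ℕ → GI → ℂ) (hp : IsStdBasis p) (lam : ℂ) :
    Tendsto (fun N => ∑ n ∈ Finset.range N, lam^n * p n 0) atTop (nhds (eFun lam 0)) := by
  have h1 : eFun lam 0 = 1 := by simp [eFun]
  rw [h1]
  have key : ∀ N, 1 ≤ N → ∑ n ∈ Finset.range N, lam^n * p n 0 = 1 := by
    intro N hN
    induction N with
    | zero => omega
    | succ M ih =>
      cases M with
      | zero => simp [hp.2.1]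
      | succ K =>
        rw [Finset.sum_range_succ, ih (Nat.le_add_left 1 K), hp.2.2.1 K]
        ring
  refine Tendsto.congr' ?_ tendsto_const_nhds
  filter_upwards [eventually_ge_atTop 1] with N hN
  exact (key N hN).symm

lemma norm_am : ‖am‖ = Real.sqrt 2 / 2 := by
  have h2 : ‖(1:ℂ) - I‖ = Real.sqrt 2 := by
    simp [Complex.norm_def, Complex.normSq_apply]; norm_num
  simp only [am]
  rw [norm_div]
  simp [h2]

lemma norm_ap : ‖ap‖ = Real.sqrt 2 / 2 := by
  have h2 : ‖(1:ℂ) + I‖ = Real.sqrt 2 := by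
    simp [Complex.norm_def, Complex.normSq_apply]; norm_num
  simp only [ap]
  rw [norm_div]
  simp [h2]

lemma mainConv (p : ℕ → GI → ℂ) (hp : IsStdBasis p) (z : GI) (hz : 0 ≤ z.re)
    (lam : ℂ) (hl : ‖lam‖ < Real.sqrt 2) (hne : lam ≠ -1) :
    Tendsto (fun N => ∑ n ∈ Finset.range N, lam ^ n * p n z) atTop
      (nhds (eFun lam z)) := by
  have hs2 : (0:ℝ) < Real.sqrt 2 := by positivity
  have h1 : 1 + lam ≠ 0 := fun h => hne (by linear_combination h)
  have hmul : Real.sqrt 2 / 2 * ‖lam‖ < 1 := by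
    have h := mul_lt_mul_of_pos_left hl (by positivity : (0:ℝ) < Real.sqrt 2 / 2)
    have : Real.sqrt 2 / 2 * Real.sqrt 2 = 1 := by
      rw [div_mul_eq_mul_div, Real.mul_self_sqrt (by norm_num)]; norm_num
    linarith
  have hnam : ‖am * lam‖ < 1 := by rw [norm_mul, norm_am]; exact hmul
  have hnap : ‖ap * lam‖ < 1 := by rw [norm_mul, norm_ap]; exact hmul
  have hap0 : 1 + ap * lam ≠ 0 := by
    intro h
    have h' : ap * lam = -1 := by linear_combination h
    rw [h'] at hnap; simp at hnap
  have ham0 : 1 + am * lam ≠ 0 := by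
    intro h
    have h' : am * lam = -1 := by linear_combination h
    rw [h'] at hnam; simp at hnam
  obtain ⟨x, y⟩ := z
  have hx : 0 ≤ x := hz
  refine Int.le_induction (motive := fun x _ => ∀ y : ℤ,
    Tendsto (fun N => ∑ n ∈ Finset.range N, lam ^ n * p n ⟨x,y⟩) atTop
      (nhds (eFun lam ⟨x,y⟩))) ?_ ?_ x hx y
  · intro y
    induction y using Int.induction_on with
    | zero =>
      have h0 : (⟨0, 0⟩ : GI) = 0 := rfl
      rw [h0]
      exact baseConv p hp lam
    | succ k ih =>
      have e : (⟨0, (k:ℤ)⟩ : GI) + Ii = ⟨0, (k:ℤ)+1⟩ := by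
        rw [Zsqrtd.ext_iff]; simp [Ii]
      have h := stepU p hp lam h1 hnam hap0 ham0 _ ih
      rwa [e] at h
    | pred k ih =>
      have e : (⟨0, -(k:ℤ)⟩ : GI) - Ii = ⟨0, -(k:ℤ)-1⟩ := by
        rw [Zsqrtd.ext_iff]; simp [Ii]
      have h := stepD p hp lam h1 hnap hap0 ham0 _ ih
      rwa [e] at h
  · intro x hx ih y
    have e : (⟨x, y⟩ : GI) + 1 = ⟨x+1, y⟩ := by
      rw [Zsqrtd.ext_iff]; simp
    have h := stepX p hp lam h1 hap0 ham0 _ (ih y)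
    rwa [e] at h

lemma limsupPart (p : ℕ → GI → ℂ) (hp : IsStdBasis p) (z : GI) (hz : 0 ≤ z.re) :
    Filter.limsup (fun n : ℕ => ‖p n z‖ ^ (1 / (n : ℝ))) Filter.atTop
      ≤ 1 / Real.sqrt 2 := by
  have hs2 : (0:ℝ) < Real.sqrt 2 := by positivity
  refine le_of_forall_gt_imp_ge_of_dense fun b hb => ?_
  have hb0 : (0:ℝ) < b := lt_trans (by positivity) hb
  set r : ℝ := 1/b with hrdef
  have hr0 : 0 < r := by positivity
  have hrlt : r < Real.sqrt 2 := by
    rw [hrdef, div_lt_iff₀ hb0]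
    have := (div_lt_iff₀ hs2).1 hb
    nlinarith
  have hlam : ‖(r:ℂ)‖ < Real.sqrt 2 := by
    rw [Complex.norm_real, Real.norm_eq_abs, abs_of_pos hr0]; exact hrlt
  have hne : (r:ℂ) ≠ -1 := by
    intro h
    have := congrArg Complex.re h
    simp at this
    linarith
  have hconv := mainConv p hp z hz r hlam hne
  have hterm : Tendsto (fun N => (r:ℂ)^N * p N z) atTop (nhds 0) := by
    have h2 := (hconv.comp (tendsto_add_atTop_nat 1)).sub hconv
    have hid : ∀ N, (∑ n ∈ Finset.range (N+1), (r:ℂ)^n * p n z)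
        - (∑ n ∈ Finset.range N, (r:ℂ)^n * p n z) = (r:ℂ)^N * p N z := fun N => by
      rw [Finset.sum_range_succ]; ring
    simpa [hid] using h2
  have hnorm : Tendsto (fun N => r^N * ‖p N z‖) atTop (nhds 0) := by
    have h3 := tendsto_zero_iff_norm_tendsto_zero.1 hterm
    have hn : ∀ N, ‖(r:ℂ)^N * p N z‖ = r^N * ‖p N z‖ := fun N => by
      rw [norm_mul, norm_pow, Complex.norm_real, Real.norm_eq_abs, abs_of_pos hr0]
    simpa [hn, abs_of_pos hr0] using h3
  have hev : ∀ᶠ N in atTop, ‖p N z‖ ^ (1/(N:ℝ)) ≤ b := by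
    have h1 : ∀ᶠ N in atTop, r^N * ‖p N z‖ < 1 := hnorm.eventually_lt_const zero_lt_one
    filter_upwards [h1, eventually_ge_atTop 1] with N hN hN1
    have hbrn : r^N * b^N = 1 := by
      rw [← mul_pow, hrdef, one_div_mul_cancel (ne_of_gt hb0), one_pow]
    have hb' : ‖p N z‖ ≤ b^N := by
      nlinarith [pow_pos hb0 N, norm_nonneg (p N z), pow_pos hr0 N]
    have h1N : (0:ℝ) < (N:ℝ) := by exact_mod_cast Nat.lt_of_lt_of_le Nat.zero_lt_one hN1
    calc ‖p N z‖ ^ (1/(N:ℝ)) ≤ (b^N) ^ (1/(N:ℝ)) :=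
          Real.rpow_le_rpow (norm_nonneg _) hb' (by positivity)
      _ = b := by
        rw [← Real.rpow_natCast b N, ← Real.rpow_mul hb0.le,
          mul_one_div, div_self (ne_of_gt h1N), Real.rpow_one]
  exact Filter.limsup_le_of_le (isCoboundedUnder_le_of_le atTop (fun n => by positivity)) hev

/-- for every z in the right half-lattice (Re z ≥ 0) and every λ with
|λ| < √2 and λ ≠ −1, the series Σ λⁿ p n (z) converges to e_λ(z).  In particular
limsup_{n→∞} |p n (z)|^{1/n} ≤ 1/√2 on Λ₊. -/
theorem stmt8 (p : ℕ → GI → ℂ) (hp : IsStdBasis p) :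
    (∀ (z : GI), 0 ≤ z.re → ∀ lam : ℂ, ‖lam‖ < Real.sqrt 2 → lam ≠ -1 →
      Filter.Tendsto (fun N => ∑ n ∈ Finset.range N, lam ^ n * p n z)
        Filter.atTop (nhds (eFun lam z))) ∧
    (∀ z : GI, 0 ≤ z.re →
      Filter.limsup (fun n : ℕ => ‖p n z‖ ^ (1 / (n : ℝ))) Filter.atTop
        ≤ 1 / Real.sqrt 2) := by
  exact ⟨fun z hz lam hl hne => mainConv p hp z hz lam hl hne,
    fun z hz => limsupPart p hp z hz⟩
end
end

section
/- Define e₋₁ : Λ₊ → ℂ by e₋₁(z) = (−i)^{Im z} if Re z = 0 and e₋₁(z) = 0 if Re z > 0. Then e₋₁ is discrete analytic on Λ₊, is not identically zero, and satisfies (δ_x e₋₁)(z) = −e₋₁(z) for every z ∈ Λ₊; hence −1 is an eigenvalue of δ_x acting on the space of ℂ-valued discrete analytic functions on the right half-lattice Λ₊ (in contrast with the full lattice Λ, where −1 is not an eigenvalue). -/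
open Complex

noncomputable section

/-- The right half-lattice Λ₊ = {z ∈ Λ : Re z ≥ 0}. -/
def Lp := {z : GI // 0 ≤ z.re}

/-- The point 0 of Λ₊. -/
def pt0 : Lp := ⟨0, le_refl 0⟩

/-- The shift z ↦ z + 1 on Λ₊. -/
def shx (z : Lp) : Lp := ⟨z.1 + 1, by have := z.2; simp [Zsqrtd.re_add]; omega⟩

/-- The shift z ↦ z + i on Λ₊. -/
def shy (z : Lp) : Lp := ⟨z.1 + Ii, by have := z.2; simp [Zsqrtd.re_add, Ii]; omega⟩

/-- The difference operator δ_x on functions on Λ₊. -/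
def dxp (f : Lp → ℂ) : Lp → ℂ := fun z => f (shx z) - f z

/-- The difference operator δ_y on functions on Λ₊. -/
def dyp (f : Lp → ℂ) : Lp → ℂ := fun z => f (shy z) - f z

/-- Discrete analyticity on the right half-lattice Λ₊. -/
def DAp (f : Lp → ℂ) : Prop :=
  ∀ z : Lp, (f (shx (shy z)) - f z) / (1 + I) = (f (shx z) - f (shy z)) / (1 - I)

/-- e₋₁(z) = (−i)^{Im z} if Re z = 0, and 0 if Re z > 0. -/
def eMinusOne : Lp → ℂ := fun z => if z.1.re = 0 then (-I) ^ z.1.im else 0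

/-!
On the boundary column `Re z = 0` the function `e₋₁` is multiplied by `-i` at each step upwards,
and it vanishes one step to the right. The discrete Cauchy–Riemann equation at a boundary square
then reduces to `(1 - i) / (1 + i) = -i`, and `δ_x e₋₁ = -e₋₁` is immediate. On the full lattice,
`δ_x f = -f` says `f (z + 1) = 0` for every `z`, so `f = 0`.
-/

lemma eMinusOne_shx (z : Lp) : eMinusOne (shx z) = 0 := by
  have hz := z.2
  refine if_neg ?_
  simp only [shx, Zsqrtd.re_add, Zsqrtd.re_one]
  omega

lemma eMinusOne_shy (z : Lp) : eMinusOne (shy z) = -I * eMinusOne z := by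
  have hre : (z.1 + Ii).re = z.1.re := by simp [Ii]
  have him : (z.1 + Ii).im = z.1.im + 1 := by simp [Ii]
  simp only [eMinusOne, shy, hre, him]
  split_ifs
  · rw [zpow_add_one₀ (neg_ne_zero.mpr I_ne_zero), mul_comm]
  · rw [mul_zero]

lemma DAp_of_shx_eq_zero {f : Lp → ℂ} (hx : ∀ z, f (shx z) = 0)
    (hy : ∀ z, f (shy z) = -I * f z) : DAp f := by
  intro z
  have h1 : (1 + I : ℂ) ≠ 0 := fun h => by simpa using congrArg Complex.im h
  have h2 : (1 - I : ℂ) ≠ 0 := fun h => by simpa using congrArg Complex.im h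
  rw [hx, hx, hy, div_eq_div_iff h1 h2]
  linear_combination (-f z) * I_sq

lemma eq_zero_of_dx_eq_neg {f : GI → ℂ} (h : ∀ z, dx f z = -f z) : f = 0 := by
  funext w
  have hw := h (w - 1)
  simp only [dx, sub_add_cancel] at hw
  simpa using hw

/-- e₋₁ is discrete analytic on Λ₊, not identically zero, and
δ_x e₋₁ = −e₋₁; hence −1 is an eigenvalue of δ_x on the discrete analytic functions
on Λ₊, in contrast with the full lattice Λ, where −1 is not an eigenvalue. -/
theorem stmt9 :
    DAp eMinusOne ∧
    eMinusOne ≠ 0 ∧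
    (∀ z : Lp, dxp eMinusOne z = -eMinusOne z) ∧
    ¬ ∃ f : GI → ℂ, DA f ∧ f ≠ 0 ∧ ∀ z : GI, dx f z = -f z := by
  refine ⟨DAp_of_shx_eq_zero eMinusOne_shx eMinusOne_shy, ?_, ?_, ?_⟩
  · intro h
    simpa [eMinusOne, pt0] using congrFun h pt0
  · intro z
    rw [dxp, eMinusOne_shx, zero_sub]
  · rintro ⟨f, -, hne, hdx⟩
    exact hne (eq_zero_of_dx_eq_neg hdx)
end
end

section
/- Let A be an N×N complex matrix whose spectral radius is strictly less than √2, and let p be the standard basis of discrete analytic polynomials on Λ₊. Then det(1+α₊A) ≠ 0 and det(1+α₋A) ≠ 0, and for every z ∈ Λ₊ the series Σ_{n=0}^{∞} p n (z) · Aⁿ converges with sum e_A(z) = (1+A)^{Re z} · (1+α₊A)^{Im z} · (1+α₋A)^{−Im z}. -/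
open Complex

noncomputable section

/-- The defining property of the standard basis of discrete analytic polynomials
on Λ₊. -/
def IsStdBasisP (p : ℕ → Lp → ℂ) : Prop :=
  (∀ n, DAp (p n)) ∧ (∀ z : Lp, p 0 z = 1) ∧ (∀ n, p (n + 1) pt0 = 0) ∧
    (∀ n, dxp (p (n + 1)) = p n)

/-- e_A(z) = (1+A)^{Re z} (1+α₊A)^{Im z} (1+α₋A)^{−Im z}, where negative integer
powers are powers of the inverse matrix. -/
def eMat {N : ℕ} (A : Matrix (Fin N) (Fin N) ℂ) (z : Lp) : Matrix (Fin N) (Fin N) ℂ :=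
  (1 + A) ^ z.1.re.toNat * (1 + ap • A) ^ (z.1.im : ℤ) * (1 + am • A) ^ (-(z.1.im : ℤ))

/-!
Both sides obey the same difference equations on Λ₊. On the matrix side
`e_A(z+1) = (1+A) e_A(z)` and `(1+α₋A) e_A(z+i) = (1+α₊A) e_A(z)`; on the coefficient side
`δ_x p (n+1) = p n` and discrete analyticity give
`p (n+1) (z+i) = p (n+1) z + α₊ p n z - α₋ p n (z+i)`.
So the partial sums at `z + i` satisfy an affine recursion `S (M+1) = g M - α₋A S M` whose
forcing term `g` converges by the hypothesis at `z`. Since `|α₋| = 1/√2`, the spectrum of `α₋A`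
lies in the open unit disc, so Gelfand's formula makes `∑ ‖(α₋A)ⁿ‖` finite, and the recursion
converges to the unique solution `L` of `(1+α₋A) L = (1+α₊A) e_A(z)`, i.e. to `e_A(z+i)`.
The same argument with `α₊` and `α₋` exchanged goes from `z + i` back to `z`, and the `x`-step is
the case of a vanishing feedback term. Convergence thus spreads from `z = 0`, where the series is
`1`, to the whole half-lattice.
-/

open Filter Finset Topology
open scoped NNReal ENNReal

section SpectrumScaling

variable {𝕜 E : Type*} [NormedField 𝕜] [Ring E] [Algebra 𝕜 E] {a : E} {c : 𝕜} {r : ℝ}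

lemma isUnit_one_add_smul_of_forall_norm_lt (hc : ‖c‖ * r = 1)
    (ha : ∀ ν ∈ spectrum 𝕜 a, ‖ν‖ < r) : IsUnit (1 + c • a) := by
  have hc0 : -c ≠ 0 := by rintro h; simp [neg_eq_zero.mp h] at hc
  have hmem : -c⁻¹ ∉ spectrum 𝕜 a := fun h =>
    (ha _ h).ne (by rw [norm_neg, norm_inv, inv_eq_of_mul_eq_one_right hc])
  have key : 1 + c • a = Units.mk0 (-c) hc0 • (algebraMap 𝕜 E (-c⁻¹) - a) := by
    rw [Units.smul_mk0, Algebra.algebraMap_eq_smul_one, smul_sub, smul_smul, neg_mul_neg,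
      mul_inv_cancel₀ (neg_ne_zero.mp hc0), one_smul, neg_smul, sub_neg_eq_add]
  rw [key, isUnit_smul_iff]
  exact spectrum.notMem_iff.mp hmem

lemma norm_lt_one_of_mem_spectrum_smul (hc : ‖c‖ * r = 1)
    (ha : ∀ ν ∈ spectrum 𝕜 a, ‖ν‖ < r) : ∀ μ ∈ spectrum 𝕜 (c • a), ‖μ‖ < 1 := by
  have hc0 : c ≠ 0 := by rintro rfl; simp at hc
  intro μ hμ
  rw [show c • a = Units.mk0 c hc0 • a from rfl, spectrum.unit_smul_eq_smul] at hμ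
  obtain ⟨ν, hν, rfl⟩ := Set.mem_smul_set.mp hμ
  rw [Units.smul_def, Units.val_mk0, smul_eq_mul, norm_mul, ← hc]
  exact mul_lt_mul_of_pos_left (ha ν hν) (norm_pos_iff.mpr hc0)

end SpectrumScaling

lemma summable_norm_pow_of_forall_norm_lt_one {E : Type*} [NormedRing E] [NormedAlgebra ℂ E]
    [CompleteSpace E] {b : E} (hb : ∀ μ ∈ spectrum ℂ b, ‖μ‖ < 1) :
    Summable fun n : ℕ => ‖b ^ n‖ := by
  cases subsingleton_or_nontrivial E
  · simp [Subsingleton.elim (b ^ _) 0]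
  have hρ : spectralRadius ℂ b < (1 : ℝ≥0) :=
    spectrum.spectralRadius_lt_of_forall_lt b fun μ hμ => by
      simpa [← NNReal.coe_lt_coe] using hb μ hμ
  obtain ⟨r, hbr, hr1⟩ := ENNReal.lt_iff_exists_nnreal_btwn.mp hρ
  have hgelfand :=
    (spectrum.pow_nnnorm_pow_one_div_tendsto_nhds_spectralRadius b).eventually_lt_const hbr
  refine .of_norm_bounded_eventually_nat
    (summable_geometric_of_lt_one r.coe_nonneg (by exact_mod_cast hr1)) ?_
  filter_upwards [hgelfand, eventually_gt_atTop 0] with n hn hn0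
  rw [one_div, ENNReal.rpow_inv_lt_iff (by positivity), ENNReal.rpow_natCast,
    ← ENNReal.coe_pow, ENNReal.coe_lt_coe, ← NNReal.coe_lt_coe] at hn
  simpa using hn.le

section AffineRecursion

variable {E : Type*} [NormedRing E] [CompleteSpace E]

lemma tendsto_sum_range_pow_mul_of_tendsto_zero {B : E} (hB : Summable fun n : ℕ => ‖B ^ n‖)
    {a : ℕ → E} (ha : Tendsto a atTop (𝓝 0)) :
    Tendsto (fun M => ∑ k ∈ range M, B ^ k * a (M - (k + 1))) atTop (𝓝 0) := by
  obtain ⟨K, hK⟩ := ha.norm.bddAbove_range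
  set f : ℕ → ℕ → E := fun M k => B ^ k * a (M - (k + 1))
  set F : ℕ → ℕ → E := fun M => (range M : Set ℕ).indicator (f M)
  have hF : ∀ M, ∑ k ∈ range M, f M k = ∑' k, F M k := fun M => by
    rw [tsum_eq_sum (s := range M) fun k hk => Set.indicator_of_notMem (mt mem_coe.1 hk) _]
    exact sum_congr rfl fun k hk => (Set.indicator_of_mem (mem_coe.2 hk) (f M)).symm
  have hF_tendsto : ∀ k, Tendsto (F · k) atTop (𝓝 0) := fun k => by
    have : Tendsto (f · k) atTop (𝓝 0) := by
      simpa using (ha.comp (tendsto_sub_atTop_nat (k + 1))).const_mul (B ^ k)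
    refine this.congr' ?_
    filter_upwards [eventually_gt_atTop k] with M hM
    exact (Set.indicator_of_mem (mem_coe.2 (mem_range.2 hM)) (f M)).symm
  have hF_bound : ∀ M k, ‖F M k‖ ≤ ‖B ^ k‖ * K := fun M k =>
    norm_indicator_le_norm_self _ _ |>.trans <| (norm_mul_le _ _).trans <|
      mul_le_mul_of_nonneg_left (hK ⟨_, rfl⟩) (norm_nonneg _)
  simpa only [← hF, tsum_zero] using
    tendsto_tsum_of_dominated_convergence (hB.mul_right K) hF_tendsto (.of_forall (hF_bound ·))

lemma tendsto_of_affine_rec {B G L : E} {S g : ℕ → E} (hB : Summable fun n : ℕ => ‖B ^ n‖)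
    (hS : ∀ M, S (M + 1) = g M + B * S M) (hg : Tendsto g atTop (𝓝 G)) (hL : (1 - B) * L = G) :
    Tendsto S atTop (𝓝 L) := by
  have hdecomp : ∀ M,
      S M - L = B ^ M * (S 0 - L) + ∑ k ∈ range M, B ^ k * (g (M - (k + 1)) - G) := by
    intro M
    induction M with
    | zero => simp
    | succ M ih =>
      have hstep : S (M + 1) - L = (g M - G) + B * (S M - L) := by
        rw [hS, ← hL]; noncomm_ring
      rw [hstep, ih, sum_range_succ', mul_add, mul_sum]
      simp only [← mul_assoc, ← pow_succ', pow_zero, one_mul, Nat.add_sub_add_right, zero_add,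
        Nat.add_sub_cancel]
      abel
  have hpow : Tendsto (fun M => B ^ M * (S 0 - L)) atTop (𝓝 0) :=
    squeeze_zero_norm (fun M => norm_mul_le _ _) <| by
      simpa using hB.tendsto_atTop_zero.mul_const ‖S 0 - L‖
  have hconv := tendsto_sum_range_pow_mul_of_tendsto_zero hB (a := fun j => g j - G)
    (by simpa using hg.sub_const G)
  simpa [← hdecomp] using (hpow.add hconv).add_const L

end AffineRecursion

section PowerSeriesRecursion

variable {R E : Type*} [CommSemiring R]

lemma sum_range_succ_smul_pow_of_rec [Semiring E] [Algebra R E] {u v : ℕ → R} {b d : R}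
    (A : E) (h0 : u 0 = v 0) (hrec : ∀ n, u (n + 1) = v (n + 1) + b * v n + d * u n) (M : ℕ) :
    ∑ n ∈ range (M + 1), u n • A ^ n =
      ∑ n ∈ range (M + 1), v n • A ^ n + (b • A) * ∑ n ∈ range M, v n • A ^ n
        + (d • A) * ∑ n ∈ range M, u n • A ^ n := by
  have hshift : ∀ (c : R) (w : ℕ → R),
      (c • A) * ∑ n ∈ range M, w n • A ^ n = ∑ n ∈ range M, (c * w n) • A ^ (n + 1) := by
    intro c w
    simp only [mul_sum, smul_mul_smul_comm, ← pow_succ']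
  simp only [sum_range_succ' _ M, hshift, hrec, add_smul, sum_add_distrib, h0]
  abel

lemma tendsto_sum_smul_pow_of_rec [NormedRing E] [Algebra R E] [CompleteSpace E]
    {u v : ℕ → R} {b d : R} {A Lu Lv : E} (h0 : u 0 = v 0)
    (hrec : ∀ n, u (n + 1) = v (n + 1) + b * v n + d * u n)
    (hd : Summable fun n : ℕ => ‖(d • A) ^ n‖)
    (hv : Tendsto (fun M => ∑ n ∈ range M, v n • A ^ n) atTop (𝓝 Lv))
    (hL : (1 - d • A) * Lu = (1 + b • A) * Lv) :
    Tendsto (fun M => ∑ n ∈ range M, u n • A ^ n) atTop (𝓝 Lu) :=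
  tendsto_of_affine_rec hd (sum_range_succ_smul_pow_of_rec A h0 hrec)
    (((tendsto_add_atTop_iff_nat 1).2 hv).add (hv.const_mul (b • A)))
    (by rw [hL, add_mul, one_mul])

lemma commute_one_add_smul [Semiring E] [Algebra R E] (A : E) (a b : R) :
    Commute (1 + a • A) (1 + b • A) :=
  (Commute.one_left _).add_left <|
    (Commute.one_right _).add_right (((Commute.refl A).smul_left a).smul_right b)

end PowerSeriesRecursion

lemma norm_ap_mul_sqrt_two : ‖ap‖ * √2 = 1 := by
  rw [ap, norm_div, Complex.norm_def]
  norm_num [Complex.normSq_apply, div_mul_eq_mul_div]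

lemma norm_am_mul_sqrt_two : ‖am‖ * √2 = 1 := by
  rw [am, norm_div, Complex.norm_def]
  norm_num [Complex.normSq_apply, div_mul_eq_mul_div]

@[elab_as_elim]
lemma Lp.induction {P : Lp → Prop} (h0 : P pt0) (hx : ∀ z, P z → P (shx z))
    (hy : ∀ z, P z → P (shy z)) (hy' : ∀ z, P (shy z) → P z) (z : Lp) : P z := by
  let pt (n : ℕ) (y : ℤ) : Lp := ⟨⟨n, y⟩, Int.natCast_nonneg n⟩
  have hshx : ∀ n y, shx (pt n y) = pt (n + 1) y := fun n y =>
    Subtype.ext <| by ext <;> simp [pt, shx]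
  have hshy : ∀ n y, shy (pt n y) = pt n (y + 1) := fun n y =>
    Subtype.ext <| by ext <;> simp [pt, shy, Ii]
  have hrow : ∀ n, P (pt n 0) := by
    intro n
    induction n with
    | zero => exact h0
    | succ n ih => simpa [hshx] using hx _ ih
  have hcol : ∀ n (y : ℤ), P (pt n y) := by
    intro n y
    induction y using Int.induction_on with
    | zero => exact hrow n
    | succ y ih => simpa [hshy] using hy _ ih
    | pred y ih => exact hy' _ (by simpa [hshy] using ih)
  obtain ⟨⟨x, y⟩, hx0⟩ := z
  obtain ⟨n, rfl⟩ := Int.eq_ofNat_of_zero_le hx0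
  exact hcol n y

namespace IsStdBasisP

variable {p : ℕ → Lp → ℂ}

lemma apply_shx (hp : IsStdBasisP p) (n : ℕ) (z : Lp) :
    p (n + 1) (shx z) = p (n + 1) z + p n z := by
  rw [← hp.2.2.2 n, dxp]
  ring

lemma apply_shy (hp : IsStdBasisP p) (n : ℕ) (z : Lp) :
    p (n + 1) (shy z) = p (n + 1) z + ap * p n z + -am * p n (shy z) := by
  have hDA := hp.1 (n + 1) z
  rw [div_eq_div_iff (by simp [Complex.ext_iff]) (by simp [Complex.ext_iff]), apply_shx hp,
    apply_shx hp] at hDA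
  rw [ap, am]
  linear_combination hDA / 2

end IsStdBasisP

section eMat

variable {N : ℕ} (A : Matrix (Fin N) (Fin N) ℂ)

lemma eMat_pt0 : eMat A pt0 = 1 := by
  simp [eMat, pt0]

lemma eMat_shx (z : Lp) : eMat A (shx z) = (1 + A) * eMat A z := by
  have hre : (z.1.re + 1).toNat = z.1.re.toNat + 1 := by have := z.2; omega
  simp only [eMat, shx, Zsqrtd.re_add, Zsqrtd.im_add, Zsqrtd.re_one, Zsqrtd.im_one, add_zero,
    hre, pow_succ', mul_assoc]

lemma eMat_shy {z : Lp} (hQ : IsUnit (1 + ap • A).det) (hR : IsUnit (1 + am • A).det) :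
    (1 + am • A) * eMat A (shy z) = (1 + ap • A) * eMat A z := by
  set P : Matrix (Fin N) (Fin N) ℂ := 1 + A
  set Q : Matrix (Fin N) (Fin N) ℂ := 1 + ap • A
  set R : Matrix (Fin N) (Fin N) ℂ := 1 + am • A
  set k := z.1.re.toNat
  set y := z.1.im
  have hPQ : Commute P Q := by simpa using commute_one_add_smul A 1 ap
  have hPR : Commute P R := by simpa using commute_one_add_smul A 1 am
  have hQR : Commute Q R := commute_one_add_smul A ap am
  have hshy : eMat A (shy z) = P ^ k * Q ^ (y + 1) * R ^ (-(y + 1)) := by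
    simp [eMat, shy, Ii, P, Q, R, k, y]
  calc R * eMat A (shy z) = P ^ k * Q ^ (y + 1) * (R * R ^ (-(y + 1))) := by
        rw [hshy, ← mul_assoc, ((hPR.pow_left k).symm.mul_right
          (Matrix.Commute.zpow_left hQR (y + 1)).symm).eq, mul_assoc]
    _ = Q * (P ^ k * Q ^ y * R ^ (-y)) := by
        rw [← Matrix.zpow_one_add hR, show 1 + -(y + 1) = -y by ring, Matrix.zpow_add_one hQ,
          ← (Matrix.Commute.self_zpow Q y).eq, ← mul_assoc (P ^ k), (hPQ.pow_left k).eq]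
        simp only [mul_assoc]

end eMat

section MatrixSeries

-- Any norm will do: the ℓ∞ operator norm is submultiplicative and induces the entrywise topology.
attribute [local instance] Matrix.linftyOpNormedAddCommGroup Matrix.linftyOpNormedRing
  Matrix.linftyOpNormedAlgebra

variable {N : ℕ} {A : Matrix (Fin N) (Fin N) ℂ}

lemma isUnit_det_one_add_smul {c : ℂ} (hc : ‖c‖ * √2 = 1)
    (hA : ∀ μ ∈ spectrum ℂ A, ‖μ‖ < √2) : IsUnit (1 + c • A).det :=
  (Matrix.isUnit_iff_isUnit_det _).mp (isUnit_one_add_smul_of_forall_norm_lt hc hA)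

lemma summable_norm_neg_smul_pow {c : ℂ} (hc : ‖c‖ * √2 = 1)
    (hA : ∀ μ ∈ spectrum ℂ A, ‖μ‖ < √2) : Summable fun n : ℕ => ‖(-c • A) ^ n‖ :=
  summable_norm_pow_of_forall_norm_lt_one <|
    norm_lt_one_of_mem_spectrum_smul (by rwa [norm_neg]) hA

lemma tendsto_sum_smul_pow_eMat (hA : ∀ μ ∈ spectrum ℂ A, ‖μ‖ < √2) {p : ℕ → Lp → ℂ}
    (hp : IsStdBasisP p) (z : Lp) :
    Tendsto (fun M => ∑ n ∈ range M, p n z • A ^ n) atTop (𝓝 (eMat A z)) := by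
  have hp0 : ∀ z, p 0 z = 1 := hp.2.1
  have hQ := isUnit_det_one_add_smul norm_ap_mul_sqrt_two hA
  have hR := isUnit_det_one_add_smul norm_am_mul_sqrt_two hA
  refine Lp.induction ?_ (fun z ih => ?_) (fun z ih => ?_) (fun z ih => ?_) z
  · rw [eMat_pt0]
    refine tendsto_atTop_of_eventually_const (i₀ := 1) fun M hM => ?_
    obtain ⟨M, rfl⟩ := Nat.exists_eq_add_of_le' hM
    simp [sum_range_succ', hp0, hp.2.2.1]
  · refine tendsto_sum_smul_pow_of_rec (b := 1) (d := 0) (by simp [hp0])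
      (fun n => by simp [hp.apply_shx]) ((summable_nat_add_iff 1).mp (by simp)) ih ?_
    simp [eMat_shx]
  · refine tendsto_sum_smul_pow_of_rec (by simp [hp0]) (hp.apply_shy · z)
      (summable_norm_neg_smul_pow norm_am_mul_sqrt_two hA) ih ?_
    simpa using eMat_shy A hQ hR
  · refine tendsto_sum_smul_pow_of_rec (b := am) (d := -ap) (by simp [hp0])
      (fun n => by linear_combination -hp.apply_shy n z)
      (summable_norm_neg_smul_pow norm_ap_mul_sqrt_two hA) ih ?_
    simpa using (eMat_shy A hQ hR).symm

end MatrixSeries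

/-- if the spectral radius of A is < √2 then det(1+α₊A) ≠ 0,
det(1+α₋A) ≠ 0, and for every z ∈ Λ₊ the series Σ p n (z) Aⁿ converges to e_A(z). -/
theorem stmt14 (N : ℕ) (A : Matrix (Fin N) (Fin N) ℂ)
    (hA : ∀ μ ∈ spectrum ℂ A, ‖μ‖ < Real.sqrt 2)
    (p : ℕ → Lp → ℂ) (hp : IsStdBasisP p) :
    (1 + ap • A).det ≠ 0 ∧ (1 + am • A).det ≠ 0 ∧
    ∀ z : Lp,
      Filter.Tendsto (fun M => ∑ n ∈ Finset.range M, p n z • A ^ n)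
        Filter.atTop (nhds (eMat A z)) :=
  ⟨(isUnit_det_one_add_smul norm_ap_mul_sqrt_two hA).ne_zero,
    (isUnit_det_one_add_smul norm_am_mul_sqrt_two hA).ne_zero, tendsto_sum_smul_pow_eMat hA hp⟩
end
end

section
/- Let A be an N×N complex matrix with det(1+α₊A) ≠ 0 and det(1+α₋A) ≠ 0, let B be an N×k complex matrix and C an m×N complex matrix. If C·Aʲ·B = 0 for every j ∈ ℕ, then C · e_A(z) · B = 0 for every z ∈ Λ₊. (This is the key step showing that the map sending a realization D + C(I−zA)^{−⊙}⊙(zB) to the rational function D + zC(I−zA)^{−1}B is injective.) -/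
open Complex

noncomputable section

/-! `e_A(z)` lies in the subalgebra `ℂ[A]` generated by `A`: the factors `1 + A`, `1 + α₊A`,
`1 + α₋A` do, and the inverse of a matrix in a subalgebra of the finite-dimensional algebra
`Matrix n n K` lies in that subalgebra again, since a non-zero-divisor of an Artinian ring is a
unit. Every element of `ℂ[A]` is a linear combination of powers `Aʲ`, all of which are killed
by `M ↦ C * M * B`. -/

open Polynomial

theorem Subalgebra.isUnit_mk_of_isUnit {K A : Type*} [Field K] [Ring A] [Algebra K A]
    [FiniteDimensional K A] (S : Subalgebra K A) {x : A} (hxS : x ∈ S) (hx : IsUnit x) :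
    IsUnit (⟨x, hxS⟩ : S) :=
  IsArtinianRing.isUnit_of_isIntegral_of_nonZeroDivisor (R := K)
    (Algebra.IsIntegral.isIntegral _)
    (comap_nonZeroDivisors_le_of_injective (f := S.val) Subtype.val_injective
      hx.mem_nonZeroDivisors)

namespace Matrix

variable {n : Type*} [Fintype n] [DecidableEq n]

theorem inv_mem_subalgebra {K : Type*} [Field K] {S : Subalgebra K (Matrix n n K)}
    {M : Matrix n n K} (hM : M ∈ S) (hdet : IsUnit M.det) : M⁻¹ ∈ S := by
  obtain ⟨u, hu⟩ := S.isUnit_mk_of_isUnit hM ((isUnit_iff_isUnit_det M).2 hdet)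
  have hinv : M * ((u⁻¹ : Sˣ) : S) = 1 := by
    have hM' : M = ((u : S) : Matrix n n K) := by rw [hu]
    rw [hM', ← Subalgebra.coe_mul, Units.mul_inv, Subalgebra.coe_one]
  rw [inv_eq_right_inv hinv]
  exact Subtype.property _

theorem zpow_mem_subalgebra {K : Type*} [Field K] {S : Subalgebra K (Matrix n n K)}
    {M : Matrix n n K} (hM : M ∈ S) (hdet : IsUnit M.det) (j : ℤ) : M ^ j ∈ S := by
  obtain ⟨j, rfl | rfl⟩ := j.eq_nat_or_neg
  · rw [zpow_natCast]
    exact pow_mem hM j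
  · rw [zpow_neg_natCast, ← inv_pow']
    exact pow_mem (inv_mem_subalgebra hM hdet) j

theorem mul_mul_eq_zero_of_mem_adjoin {R : Type*} [CommSemiring R] {l o : Type*}
    {A M : Matrix n n R} {B : Matrix n o R} {C : Matrix l n R}
    (h : ∀ j : ℕ, C * A ^ j * B = 0) (hM : M ∈ Algebra.adjoin R {A}) : C * M * B = 0 := by
  rw [Algebra.adjoin_singleton_eq_range_aeval] at hM
  obtain ⟨p, rfl⟩ := hM
  simp [aeval_eq_sum_range, Matrix.mul_sum, Matrix.sum_mul, h]

end Matrix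

/-- if det(1+α₊A) ≠ 0 and det(1+α₋A) ≠ 0 and C·Aʲ·B = 0 for all
j ∈ ℕ, then C·e_A(z)·B = 0 for every z ∈ Λ₊. -/
theorem stmt15 (N k m : ℕ) (A : Matrix (Fin N) (Fin N) ℂ)
    (B : Matrix (Fin N) (Fin k) ℂ) (C : Matrix (Fin m) (Fin N) ℂ)
    (hp : (1 + ap • A).det ≠ 0) (hm : (1 + am • A).det ≠ 0)
    (h : ∀ j : ℕ, C * A ^ j * B = 0) :
    ∀ z : Lp, C * eMat A z * B = 0 := by
  intro z
  set S := Algebra.adjoin ℂ {A}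
  have hA : A ∈ S := Algebra.self_mem_adjoin_singleton ℂ A
  have hone_add_smul (c : ℂ) : 1 + c • A ∈ S := add_mem (one_mem S) (S.smul_mem hA c)
  have heMat : eMat A z ∈ S :=
    mul_mem (mul_mem (pow_mem (add_mem (one_mem S) hA) _)
      (Matrix.zpow_mem_subalgebra (hone_add_smul ap) (isUnit_iff_ne_zero.2 hp) _))
      (Matrix.zpow_mem_subalgebra (hone_add_smul am) (isUnit_iff_ne_zero.2 hm) _)
  exact Matrix.mul_mul_eq_zero_of_mem_adjoin h heMat
end
end
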